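/- arXiv:1703.05599 — 8 statements merged into one kernel-verified Lean document; each statement's English description precedes it below -/
import Mathlib

section
/- Let R be a noetherian commutative ring, M an R-module, and t a nilpotent R-linear endomorphism of M. Then M is finitely generated as an R-module if and only if the kernel of t is finitely generated. -/
/-- `t` maps `ker (t ^ (k + 1))` into `ker (t ^ k)` with kernel `ker t`, so finite generation
climbs up the chain `ker (t ^ k)`. -/
theorem LinearMap.fg_ker_pow {R M : Type*} [Ring R] [IsNoetherianRing R]
    [AddCommGroup M] [Module R M] (t : M →ₗ[R] M) (h : (LinearMap.ker t).FG) (k : ℕ) :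
    (LinearMap.ker (t ^ k)).FG := by
  induction k with
  | zero => simpa only [pow_zero, Module.End.one_eq_id, LinearMap.ker_id] using Submodule.fg_bot
  | succ k ih =>
    refine Submodule.fg_of_fg_map_of_fg_inf_ker t (ih.of_le ?_) (h.of_le inf_le_right)
    rintro _ ⟨y, hy, rfl⟩
    rwa [SetLike.mem_coe, LinearMap.mem_ker, pow_succ, Module.End.mul_apply] at hy

/-- Let `R` be a noetherian commutative ring, `M` an `R`-module, and `t` a nilpotent
`R`-linear endomorphism of `M`. Then `M` is finitely generated as an `R`-module if and
only if the kernel of `t` is finitely generated. -/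
theorem stmt0 {R : Type*} [CommRing R] [IsNoetherianRing R]
    {M : Type*} [AddCommGroup M] [Module R M]
    (t : M →ₗ[R] M) (ht : IsNilpotent t) :
    Module.Finite R M ↔ Module.Finite R (LinearMap.ker t) := by
  refine ⟨fun _ ↦ inferInstance, fun h ↦ ?_⟩
  obtain ⟨r, hr⟩ := ht
  have hfg := t.fg_ker_pow (Module.Finite.iff_fg.mp h) r
  rw [hr, LinearMap.ker_zero] at hfg
  exact Module.finite_def.mpr hfg
end

section
/- Let R be a noetherian commutative ring, V a noetherian R-module, and t an R-linear endomorphism of V; view V as a Z[T]-module with T acting through t. Then the evaluation map f ↦ f(1) gives an isomorphism from Hom_{Z[T]}(Z[T,T⁻¹], V) onto the submodule V^∞ = ⋂_{n≥0} tⁿV of infinitely t-divisible elements of V. -/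
/-! Write `V^∞ = ⋂ₙ tⁿ V`. By Fitting's lemma, `ker t` meets some `range tᴹ` trivially, hence
meets `V^∞` trivially, so `t` is injective on `V^∞`; and `t` maps `V^∞` onto itself, because two
`t`-preimages of `u ∈ V^∞` inside `range tᴹ` must coincide. A compatible sequence
`t (m (n+1)) = m n` lies entirely in `V^∞`, so it is determined by `m 0` (injectivity), and
every `v ∈ V^∞` starts one (surjectivity). -/

namespace Module.End

variable {R V : Type*} [Ring R] [AddCommGroup V] [Module R V] (t : Module.End R V)

def divisiblePart : Submodule R V := ⨅ n : ℕ, LinearMap.range (t ^ n)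

lemma mem_divisiblePart {v : V} : v ∈ t.divisiblePart ↔ ∀ n : ℕ, v ∈ LinearMap.range (t ^ n) :=
  Submodule.mem_iInf _

lemma divisiblePart_le_range_pow (n : ℕ) : t.divisiblePart ≤ LinearMap.range (t ^ n) :=
  iInf_le _ n

lemma exists_disjoint_ker_range_pow [IsNoetherian R V] :
    ∃ M, Disjoint (LinearMap.ker t) (LinearMap.range (t ^ M)) := by
  obtain ⟨N, hN⟩ := Filter.eventually_atTop.mp t.eventually_disjoint_ker_pow_range_pow
  refine ⟨N + 1, (hN (N + 1) N.le_succ).mono_left fun u hu => ?_⟩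
  exact pow_map_zero_of_le (k := 1) (Nat.le_add_left 1 N) (by simpa using hu)

lemma disjoint_ker_divisiblePart [IsNoetherian R V] :
    Disjoint (LinearMap.ker t) t.divisiblePart := by
  obtain ⟨M, hM⟩ := t.exists_disjoint_ker_range_pow
  exact hM.mono_right (t.divisiblePart_le_range_pow M)

lemma exists_mem_divisiblePart_apply_eq [IsNoetherian R V] {u : V}
    (hu : u ∈ t.divisiblePart) : ∃ w ∈ t.divisiblePart, t w = u := by
  obtain ⟨M, hM⟩ := t.exists_disjoint_ker_range_pow
  obtain ⟨z₀, hz₀⟩ := t.divisiblePart_le_range_pow (M + 1) hu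
  refine ⟨(t ^ M) z₀, t.mem_divisiblePart.2 fun n => ?_, by rwa [← mul_apply, ← pow_succ']⟩
  obtain ⟨z, hz⟩ := t.divisiblePart_le_range_pow (M + n + 1) hu
  have hdiff : (t ^ M) z₀ - (t ^ (M + n)) z ∈ LinearMap.ker t ⊓ LinearMap.range (t ^ M) := by
    refine Submodule.mem_inf.2 ⟨?_, sub_mem ⟨z₀, rfl⟩ ⟨(t ^ n) z, by rw [← mul_apply, ← pow_add]⟩⟩
    rw [LinearMap.mem_ker, map_sub, ← mul_apply, ← mul_apply, ← pow_succ', ← pow_succ', hz₀, hz,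
      sub_self]
  rw [sub_eq_zero.1 (hM.le_bot hdiff), add_comm, pow_add, mul_apply]
  exact LinearMap.mem_range_self _ _

section CompatibleSequence

variable {t} {m : ℕ → V}

lemma pow_apply_add_eq_of_forall_apply_succ (hm : ∀ n, t (m (n + 1)) = m n) (n k : ℕ) :
    (t ^ k) (m (n + k)) = m n := by
  induction k with
  | zero => rfl
  | succ k ih => rw [pow_succ, mul_apply, ← add_assoc, hm, ih]

lemma mem_divisiblePart_of_forall_apply_succ (hm : ∀ n, t (m (n + 1)) = m n) (n : ℕ) :
    m n ∈ t.divisiblePart :=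
  t.mem_divisiblePart.2 fun k => ⟨m (n + k), pow_apply_add_eq_of_forall_apply_succ hm n k⟩

lemma eq_of_forall_apply_succ (hm : ∀ n, t (m (n + 1)) = m n)
    (hker : Disjoint (LinearMap.ker t) t.divisiblePart)
    {m' : ℕ → V} (hm' : ∀ n, t (m' (n + 1)) = m' n) (h₀ : m 0 = m' 0) : m = m' := by
  funext n
  induction n with
  | zero => exact h₀
  | succ n ih =>
    have hdiff : m (n + 1) - m' (n + 1) ∈ LinearMap.ker t ⊓ t.divisiblePart :=
      Submodule.mem_inf.2 ⟨by rw [LinearMap.mem_ker, map_sub, hm, hm', ih, sub_self],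
        sub_mem (mem_divisiblePart_of_forall_apply_succ hm _)
          (mem_divisiblePart_of_forall_apply_succ hm' _)⟩
    exact sub_eq_zero.1 (hker.le_bot hdiff)

end CompatibleSequence

lemma exists_forall_apply_succ_of_mem_divisiblePart
    (hsurj : ∀ u ∈ t.divisiblePart, ∃ w ∈ t.divisiblePart, t w = u) {v : V}
    (hv : v ∈ t.divisiblePart) : ∃ m : ℕ → V, (∀ n, t (m (n + 1)) = m n) ∧ m 0 = v := by
  choose f hf_mem hf_apply using hsurj
  let m : ℕ → t.divisiblePart :=
    Nat.rec (motive := fun _ => t.divisiblePart) ⟨v, hv⟩ fun _ w => ⟨f w w.2, hf_mem w w.2⟩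
  exact ⟨fun n => (m n).1, fun n => hf_apply _ (m n).2, rfl⟩

end Module.End

/-- Let `R` be a commutative ring, `V` a noetherian `R`-module, and `t` an `R`-linear
endomorphism of `V`, so that `V` becomes a `ℤ[T]`-module with `T` acting through `t`.
A `ℤ[T]`-linear map `ℤ[T,T⁻¹] → V` is precisely a sequence `m : ℕ → V` with
`t (m (n+1)) = m n` (where `m n = f (T⁻ⁿ)`), and evaluation at `1` is the map `m ↦ m 0`.
The theorem asserts that this evaluation map is a bijection onto the submodule
`V^∞ = ⋂ₙ tⁿ V` of infinitely `t`-divisible elements: an element `v` lies in `V^∞` if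
and only if there is a unique such sequence with value `v` at `0`. -/
theorem stmt1 {R V : Type*} [CommRing R] [AddCommGroup V] [Module R V]
    [IsNoetherian R V] (t : V →ₗ[R] V) (v : V) :
    (∀ n : ℕ, v ∈ LinearMap.range (t ^ n)) ↔
      ∃! m : {m : ℕ → V // ∀ n : ℕ, t (m (n + 1)) = m n}, (m : ℕ → V) 0 = v := by
  rw [← Module.End.mem_divisiblePart]
  constructor
  · intro hv
    obtain ⟨m, hm, hm₀⟩ := Module.End.exists_forall_apply_succ_of_mem_divisiblePart t
      (fun _ hu => Module.End.exists_mem_divisiblePart_apply_eq t hu) hv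
    refine ⟨⟨m, hm⟩, hm₀, fun m' hm'₀ => Subtype.ext ?_⟩
    exact Module.End.eq_of_forall_apply_succ m'.2 (Module.End.disjoint_ker_divisiblePart t) hm
      (hm'₀.trans hm₀.symm)
  · rintro ⟨⟨m, hm⟩, rfl, -⟩
    exact Module.End.mem_divisiblePart_of_forall_apply_succ hm 0
end

section
/- Let R be a commutative noetherian ring. If ⋂_{k≥0} p^k R = 0 then Hom_Z(Z[1/p], R) = 0; conversely, for noetherian R, Hom_Z(Z[1/p], R) = 0 implies ⋂_{k≥0} p^k R = 0. -/
/-- Let `R` be a commutative noetherian ring and `p` a prime. Then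
`⋂ₖ pᵏ R = 0` if and only if every additive group homomorphism `ℤ[1/p] → R` is zero
(the forward direction holds in general; the converse uses noetherianity). -/
theorem stmt4 (p : ℕ) (hp : p.Prime) (R : Type*) [CommRing R] [IsNoetherianRing R] :
    (⨅ k : ℕ, (Ideal.span {(p : R) ^ k} : Ideal R)) = ⊥ ↔
      ∀ f : Localization.Away (p : ℤ) →+ R, f = 0 := by
  have hp0 : (p : ℤ) ≠ 0 := by exact_mod_cast hp.ne_zero
  constructor
  · intro h f
    ext x
    have key : ∀ k : ℕ, f x ∈ Ideal.span {(p : R) ^ k} := by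
      intro k
      set u : Localization.Away (p : ℤ) :=
        IsLocalization.Away.invSelf (S := Localization.Away (p : ℤ)) (p : ℤ) with hu
      have hmul : algebraMap ℤ (Localization.Away (p : ℤ)) (p : ℤ) * u = 1 :=
        IsLocalization.Away.mul_invSelf _
      have hx : x = (p ^ k : ℕ) • (u ^ k * x) := by
        rw [nsmul_eq_mul]
        have : ((p ^ k : ℕ) : Localization.Away (p : ℤ)) =
            (algebraMap ℤ (Localization.Away (p : ℤ)) (p : ℤ)) ^ k := by
          push_cast [map_pow]
          norm_cast
        rw [this, ← mul_assoc, ← mul_pow, hmul, one_pow, one_mul]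
      rw [hx, map_nsmul, nsmul_eq_mul]
      push_cast
      exact Ideal.mem_span_singleton'.mpr ⟨f (u ^ k * x), mul_comm _ _⟩
    have : f x ∈ (⊥ : Ideal R) := h ▸ Submodule.mem_iInf _ |>.mpr key
    simpa using this
  · intro h
    rw [eq_bot_iff]
    intro r hr
    set J : Ideal R := ⨅ k : ℕ, Ideal.span {(p : R) ^ k} with hJdef
    set I : Ideal R := Ideal.span {(p : R)} with hIdef
    have hJ : ∀ x, x ∈ J ↔ x ∈ (⨅ i : ℕ, I ^ i • (⊤ : Submodule R R)) := by
      intro x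
      simp only [hJdef, hIdef, Submodule.mem_iInf, Ideal.span_singleton_pow, smul_eq_mul,
        Ideal.mul_top]
    have step : ∀ x ∈ J, ∃ t ∈ J, (p : R) * t = x := by
      intro x hx
      obtain ⟨⟨c, hc⟩, hcx⟩ := (Ideal.mem_iInf_smul_pow_eq_bot_iff I x).mp ((hJ x).mp hx)
      obtain ⟨a, rfl⟩ := Ideal.mem_span_singleton'.mp hc
      refine ⟨a * x, J.mul_mem_left a hx, ?_⟩
      simp only [smul_eq_mul] at hcx
      linear_combination hcx
    choose g hgJ hgp using step
    let d : ℕ → {x : R // x ∈ J} := fun k =>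
      Nat.rec ⟨r, hr⟩ (fun _ s => ⟨g s.1 s.2, hgJ s.1 s.2⟩) k
    have hd : ∀ k, (p : R) * (d (k + 1)).1 = (d k).1 := fun k => hgp _ _
    have hdm : ∀ m k, (p : R) ^ m * (d (k + m)).1 = (d k).1 := by
      intro m
      induction m with
      | zero => simp
      | succ n ih =>
        intro k
        show (p : R) ^ (n + 1) * (d ((k + n) + 1)).1 = (d k).1
        rw [pow_succ, mul_assoc, hd (k + n), ih k]
    -- exponent function on the submonoid
    have hsp : ∀ s : Submonoid.powers (p : ℤ), ∃ k : ℕ, (p : ℤ) ^ k = (s : ℤ) := fun s => s.2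
    choose e he using hsp
    have einj : ∀ (s : Submonoid.powers (p : ℤ)) (k : ℕ), (p : ℤ) ^ k = (s : ℤ) → e s = k := by
      intro s k hk
      have : (p : ℤ) ^ (e s) = (p : ℤ) ^ k := by rw [he, hk]
      have hnat : p ^ (e s) = p ^ k := by exact_mod_cast this
      exact Nat.pow_right_injective hp.two_le hnat
    -- the key computation lemma
    have comp : ∀ (a c : ℤ) (k m : ℕ), (p : ℤ) ^ m * a = (p : ℤ) ^ k * c →
        a • (d k).1 = c • (d m).1 := by
      intro a c k m hac
      have h1 : a • (d k).1 = a • ((p : R) ^ m * (d (k + m)).1) := by rw [hdm]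
      have h2 : c • (d m).1 = c • ((p : R) ^ k * (d (m + k)).1) := by rw [hdm]
      rw [h1, h2, show m + k = k + m from add_comm m k]
      simp only [zsmul_eq_mul]
      have : ((a : R)) * ((p : R) ^ m * (d (k + m)).1)
          = (((p : ℤ) ^ m * a : ℤ) : R) * (d (k + m)).1 := by push_cast; ring
      rw [this, hac]
      push_cast; ring
    -- define the additive hom
    let F0 : Localization.Away (p : ℤ) → R := fun x =>
      Localization.liftOn x (fun a s => a • (d (e s)).1) (by
        intro a c b s hrel
        obtain ⟨u, hu⟩ := Localization.r_iff_exists.mp hrel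
        have hu' : (s : ℤ) * a = (b : ℤ) * c := by
          have hune : (u : ℤ) ≠ 0 := by
            obtain ⟨j, hj⟩ := u.2
            rw [← hj]; exact pow_ne_zero _ hp0
          exact mul_left_cancel₀ hune hu
        refine comp a c (e b) (e s) ?_
        rw [he, he]; linarith [hu'])
    have F0_mk : ∀ (a : ℤ) (s : Submonoid.powers (p : ℤ)),
        F0 (Localization.mk a s) = a • (d (e s)).1 := fun a s => rfl
    have e_one : e 1 = 0 := einj 1 0 (by simp)
    have e_mul : ∀ s t : Submonoid.powers (p : ℤ), e (s * t) = e s + e t := by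
      intro s t
      refine einj (s * t) (e s + e t) ?_
      rw [pow_add, he, he]; rfl
    have F0_zero : F0 0 = 0 := by
      rw [← Localization.mk_zero (1 : Submonoid.powers (p : ℤ)), F0_mk]
      simp
    have F0_add : ∀ x y, F0 (x + y) = F0 x + F0 y := by
      intro x y
      induction x using Localization.induction_on with
      | H xp =>
        induction y using Localization.induction_on with
        | H yp =>
          obtain ⟨a, b⟩ := xp
          obtain ⟨c, s⟩ := yp
          rw [Localization.add_mk, F0_mk, F0_mk, F0_mk, e_mul]
          have hb : ((b : ℤ)) = (p : ℤ) ^ (e b) := (he b).symm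
          have hs : ((s : ℤ)) = (p : ℤ) ^ (e s) := (he s).symm
          have l1 : a • (d (e b)).1 = ((s : ℤ) * a) • (d (e b + e s)).1 := by
            refine (comp ((s : ℤ) * a) a (e b + e s) (e b) ?_).symm
            rw [hs]; ring
          have l2 : c • (d (e s)).1 = ((b : ℤ) * c) • (d (e b + e s)).1 := by
            refine (comp ((b : ℤ) * c) c (e b + e s) (e s) ?_).symm
            rw [hb]; ring
          rw [l1, l2, ← add_smul]
          ring_nf
    let F : Localization.Away (p : ℤ) →+ R :=
      { toFun := F0, map_zero' := F0_zero, map_add' := F0_add }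
    have hF := h F
    have : F (Localization.mk 1 1) = r := by
      show F0 (Localization.mk 1 1) = r
      rw [F0_mk, e_one]
      simp [d]
    rw [hF] at this
    simpa using this.symm
end

section
/- Let J be an infinite profinite group which is pro-p (so J has open normal subgroups of index p^n with n → ∞). Then the module of J-coinvariants of the smooth representation C_c^∞(J, Z) of J (locally constant compactly supported Z-valued functions on J, with J acting by left translation) is isomorphic to Z[1/p], via the Haar measure normalized so that the characteristic function of J has measure 1. -/
/-- Left translation of a locally constant `ℤ`-valued function on a topological group:
`(h • f)(x) = f (h⁻¹ x)`. -/
def leftTranslate {J : Type*} [Group J] [TopologicalSpace J] [IsTopologicalGroup J]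
    (h : J) (f : LocallyConstant J ℤ) : LocallyConstant J ℤ :=
  ⟨fun x => f (h⁻¹ * x),
    f.isLocallyConstant.comp_continuous (continuous_const.mul continuous_id)⟩

/-- The subgroup of `C_c^∞(J, ℤ) = LocallyConstant J ℤ` (for `J` compact every locally
constant function has compact support) generated by the elements `h • f - f`; the
quotient by it is the module of `J`-coinvariants. -/
def coinvariantsSub (J : Type*) [Group J] [TopologicalSpace J] [IsTopologicalGroup J] :
    AddSubgroup (LocallyConstant J ℤ) :=
  AddSubgroup.closure {x | ∃ (h : J) (f : LocallyConstant J ℤ), x = leftTranslate h f - f}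

/-!
Integration against the Haar probability measure of `J` is a left-invariant additive map
`C^∞(J, ℤ) → ℝ`, so it factors through the coinvariants. A locally constant `f` is invariant
under right translation by some open subgroup `N`, hence `f = ∑_{q ∈ J/N} f(q) 1_{qN}`; each
`1_{qN}` is a translate of `1_N`, so `f ≡ (∑_q f(q)) • 1_N` modulo coinvariants. For `f = 1` this
gives `∫ 1_N = [J : N]⁻¹`, so `∫ f = (∑_q f(q)) / [J : N]`, which vanishes only on coinvariants.
The indices `[J : N]` are powers of `p` and, `J` being infinite, unbounded, so the image of the
integral is exactly `ℤ[1/p] ⊂ ℝ`.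
-/

open MeasureTheory

theorem LocallyConstant.sum_apply {X Y ι : Type*} [TopologicalSpace X] [AddCommMonoid Y]
    (s : Finset ι) (f : ι → LocallyConstant X Y) (x : X) : (∑ i ∈ s, f i) x = ∑ i ∈ s, f i x :=
  map_sum (LocallyConstant.evalAddMonoidHom x) f s

section Translation

variable {J : Type*} [Group J] [TopologicalSpace J] [IsTopologicalGroup J]

@[simp]
theorem leftTranslate_apply (h : J) (f : LocallyConstant J ℤ) (x : J) :
    leftTranslate h f x = f (h⁻¹ * x) :=
  rfl

theorem leftTranslate_sub_mem_coinvariantsSub (h : J) (f : LocallyConstant J ℤ) :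
    leftTranslate h f - f ∈ coinvariantsSub J :=
  AddSubgroup.subset_closure ⟨h, f, rfl⟩

open scoped Classical in
theorem leftTranslate_charFn_apply (N : OpenSubgroup J) (h x : J) :
    leftTranslate h (LocallyConstant.charFn ℤ N.isClopen) x =
      if (h : J ⧸ N.toSubgroup) = x then 1 else 0 := by
  by_cases hx : h⁻¹ * x ∈ N <;> simp [LocallyConstant.coe_charFn, hx, QuotientGroup.eq]

variable (N : OpenSubgroup J) [Fintype (J ⧸ N.toSubgroup)]

theorem sum_smul_leftTranslate_charFn {f : LocallyConstant J ℤ}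
    (hf : ∀ x, ∀ n ∈ N, f (x * n) = f x) :
    ∑ q : J ⧸ N.toSubgroup, f q.out • leftTranslate q.out (LocallyConstant.charFn ℤ N.isClopen) =
      f := by
  ext x
  rw [LocallyConstant.sum_apply, Finset.sum_eq_single (x : J ⧸ N.toSubgroup)]
  · obtain ⟨n, hx⟩ := QuotientGroup.mk_out_eq_mul N.toSubgroup x
    rw [LocallyConstant.smul_apply, leftTranslate_charFn_apply, QuotientGroup.out_eq', if_pos rfl,
      hx, hf x n n.2, smul_eq_mul, mul_one]
  · intro q _ hq
    rw [LocallyConstant.smul_apply, leftTranslate_charFn_apply, QuotientGroup.out_eq', if_neg hq,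
      smul_zero]
  · simp

theorem sub_sum_smul_charFn_mem_coinvariantsSub {f : LocallyConstant J ℤ}
    (hf : ∀ x, ∀ n ∈ N, f (x * n) = f x) :
    f - (∑ q : J ⧸ N.toSubgroup, f q.out) • LocallyConstant.charFn ℤ N.isClopen ∈
      coinvariantsSub J := by
  nth_rw 1 [← sum_smul_leftTranslate_charFn N hf]
  rw [Finset.sum_smul, ← Finset.sum_sub_distrib]
  refine AddSubgroup.sum_mem _ fun q _ => ?_
  rw [← smul_sub]
  exact AddSubgroup.zsmul_mem _ (leftTranslate_sub_mem_coinvariantsSub _ _) _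

end Translation

section CompactGroup

open scoped Pointwise

variable {J : Type*} [Group J] [TopologicalSpace J] [IsTopologicalGroup J] [CompactSpace J]

theorem LocallyConstant.exists_nhds_one_forall_mul_right_eq {Y : Type*}
    (f : LocallyConstant J Y) : ∃ V ∈ nhds (1 : J), ∀ x, ∀ v ∈ V, f (x * v) = f x := by
  have hfiber (y : Y) : ∃ V ∈ nhds (1 : J), f ⁻¹' {y} * V ⊆ f ⁻¹' {y} :=
    compact_open_separated_mul_right (f.isLocallyConstant.isClopen_fiber y).isClosed.isCompact
      (f.isLocallyConstant.isOpen_fiber y) subset_rfl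
  choose V hV hVf using hfiber
  refine ⟨⋂ y ∈ Set.range f, V y, (Filter.biInter_mem f.range_finite).2 fun y _ => hV y, ?_⟩
  intro x v hv
  exact hVf (f x) (Set.mul_mem_mul rfl (Set.mem_iInter₂.1 hv (f x) ⟨x, rfl⟩))

theorem LocallyConstant.exists_openSubgroup_forall_mul_right_eq [TotallyDisconnectedSpace J]
    {Y : Type*} (f : LocallyConstant J Y) :
    ∃ N : OpenSubgroup J, ∀ x, ∀ n ∈ N, f (x * n) = f x := by
  obtain ⟨V, hV, hfV⟩ := f.exists_nhds_one_forall_mul_right_eq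
  obtain ⟨U, hUV, hU, h1U⟩ := mem_nhds_iff.1 hV
  obtain ⟨N, hNU⟩ := ProfiniteGrp.exist_openNormalSubgroup_sub_open_nhds_of_one hU h1U
  exact ⟨N.toOpenSubgroup, fun x n hn => hfV x n (hUV (hNU hn))⟩

theorem exists_openSubgroup_lt_index [TotallyDisconnectedSpace J] [T2Space J] [Infinite J]
    (n : ℕ) : ∃ N : OpenSubgroup J, n < N.index := by
  obtain ⟨s, hs⟩ := Infinite.exists_subset_card_eq J (n + 1)
  -- an open subgroup avoiding the quotients `a⁻¹ * b` of distinct points of `s` separates them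
  set S : Set J := (fun p : J × J => p.1⁻¹ * p.2) '' {p | p.1 ∈ s ∧ p.2 ∈ s ∧ p.1 ≠ p.2}
  have hS : S.Finite := ((s.finite_toSet.prod s.finite_toSet).subset
    fun p hp => ⟨hp.1, hp.2.1⟩).image _
  have h1S : (1 : J) ∉ S := by
    rintro ⟨⟨a, b⟩, ⟨-, -, hab⟩, h⟩
    exact hab (inv_mul_eq_one.1 h)
  obtain ⟨N, hN⟩ :=
    ProfiniteGrp.exist_openNormalSubgroup_sub_open_nhds_of_one hS.isClosed.isOpen_compl h1S
  refine ⟨N.toOpenSubgroup, ?_⟩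
  have hinj : Function.Injective fun a : s => (a : J ⧸ N.toSubgroup) := by
    rintro ⟨a, ha⟩ ⟨b, hb⟩ hab
    by_contra hne
    exact hN (QuotientGroup.eq.1 hab) ⟨(a, b), ⟨ha, hb, fun h => hne (Subtype.ext h)⟩, rfl⟩
  have := Nat.card_le_card_of_injective _ hinj
  rw [Nat.card_eq_finsetCard, hs] at this
  exact this

end CompactGroup

section Integral

variable {X : Type*} [TopologicalSpace X] [CompactSpace X] [MeasurableSpace X]
  [OpensMeasurableSpace X] (μ : Measure X)

theorem LocallyConstant.integrable_intCast [IsFiniteMeasure μ] (f : LocallyConstant X ℤ) :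
    Integrable (fun x => (f x : ℝ)) μ :=
  (continuous_of_discreteTopology.comp f.continuous).integrable_of_hasCompactSupport
    (.of_compactSpace _)

noncomputable def LocallyConstant.integralAddHom [IsFiniteMeasure μ] :
    LocallyConstant X ℤ →+ ℝ where
  toFun f := ∫ x, (f x : ℝ) ∂μ
  map_zero' := by simp
  map_add' f g := by
    simp only [LocallyConstant.coe_add, Pi.add_apply, Int.cast_add]
    exact integral_add (f.integrable_intCast μ) (g.integrable_intCast μ)

theorem LocallyConstant.integralAddHom_apply [IsFiniteMeasure μ] (f : LocallyConstant X ℤ) :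
    integralAddHom μ f = ∫ x, (f x : ℝ) ∂μ :=
  rfl

theorem LocallyConstant.integralAddHom_const_one [IsProbabilityMeasure μ] :
    integralAddHom μ (const X 1) = 1 := by
  simp [integralAddHom_apply]

end Integral

section HaarIntegral

open LocallyConstant

variable {J : Type*} [Group J] [TopologicalSpace J] [IsTopologicalGroup J] [CompactSpace J]
  [MeasurableSpace J] [BorelSpace J] (μ : Measure J) [IsProbabilityMeasure μ]
  [μ.IsMulLeftInvariant]

theorem coinvariantsSub_le_ker_integralAddHom : coinvariantsSub J ≤ (integralAddHom μ).ker := by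
  rw [coinvariantsSub, AddSubgroup.closure_le]
  rintro _ ⟨h, f, rfl⟩
  simp only [SetLike.mem_coe, AddMonoidHom.mem_ker, map_sub, integralAddHom_apply,
    leftTranslate_apply, integral_mul_left_eq_self (fun x => (f x : ℝ)) h⁻¹, sub_self]

theorem integralAddHom_eq_of_sub_mem_coinvariantsSub {f g : LocallyConstant J ℤ}
    (h : f - g ∈ coinvariantsSub J) : integralAddHom μ f = integralAddHom μ g :=
  sub_eq_zero.1 (by rw [← map_sub]; exact coinvariantsSub_le_ker_integralAddHom μ h)

theorem integralAddHom_charFn (N : OpenSubgroup J) :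
    integralAddHom μ (charFn ℤ N.isClopen) = (N.index : ℝ)⁻¹ := by
  have := Fintype.ofFinite (J ⧸ N.toSubgroup)
  -- `1 = ∑_q 1_{qN}` is congruent to `[J : N] • 1_N` modulo the coinvariants
  have h := integralAddHom_eq_of_sub_mem_coinvariantsSub μ
    (sub_sum_smul_charFn_mem_coinvariantsSub N (f := const J 1) fun _ _ _ => rfl)
  rw [integralAddHom_const_one, map_zsmul] at h
  simp only [coe_const, Function.const_apply, Finset.sum_const, Finset.card_univ, nsmul_eq_mul,
    mul_one, Int.cast_natCast, zsmul_eq_mul, ← Nat.card_eq_fintype_card,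
    ← Subgroup.index_eq_card] at h
  exact eq_inv_of_mul_eq_one_right h.symm

theorem integralAddHom_eq_sum_div (N : OpenSubgroup J) [Fintype (J ⧸ N.toSubgroup)]
    {f : LocallyConstant J ℤ} (hf : ∀ x, ∀ n ∈ N, f (x * n) = f x) :
    integralAddHom μ f = (∑ q : J ⧸ N.toSubgroup, f q.out : ℤ) / N.index := by
  rw [integralAddHom_eq_of_sub_mem_coinvariantsSub μ
    (sub_sum_smul_charFn_mem_coinvariantsSub N hf), map_zsmul, integralAddHom_charFn,
    zsmul_eq_mul, div_eq_mul_inv]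

theorem ker_integralAddHom [TotallyDisconnectedSpace J] :
    (integralAddHom μ).ker = coinvariantsSub J := by
  refine le_antisymm (fun f hf => ?_) (coinvariantsSub_le_ker_integralAddHom μ)
  obtain ⟨N, hN⟩ := f.exists_openSubgroup_forall_mul_right_eq
  have := Fintype.ofFinite (J ⧸ N.toSubgroup)
  have hsum : ∑ q : J ⧸ N.toSubgroup, f q.out = 0 := by
    rw [AddMonoidHom.mem_ker, integralAddHom_eq_sum_div μ N hN, div_eq_zero_iff] at hf
    exact_mod_cast hf.resolve_right (Nat.cast_ne_zero.2 (Subgroup.index_ne_zero_of_finite))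
  simpa [hsum] using sub_sum_smul_charFn_mem_coinvariantsSub N hN

theorem mem_range_integralAddHom_iff [TotallyDisconnectedSpace J] [T2Space J] [Infinite J]
    {p : ℕ} (hp : 1 < p) (hJp : ∀ U : Subgroup J, IsOpen (U : Set J) → ∃ n : ℕ, U.index = p ^ n)
    (x : ℝ) : x ∈ (integralAddHom μ).range ↔ ∃ (a : ℤ) (n : ℕ), x = a / (p : ℝ) ^ n := by
  constructor
  · rintro ⟨f, rfl⟩
    obtain ⟨N, hN⟩ := f.exists_openSubgroup_forall_mul_right_eq
    have := Fintype.ofFinite (J ⧸ N.toSubgroup)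
    obtain ⟨n, hn⟩ := hJp N N.isOpen
    exact ⟨_, n, by rw [integralAddHom_eq_sum_div μ N hN, hn, Nat.cast_pow]⟩
  · rintro ⟨a, n, rfl⟩
    obtain ⟨N, hN⟩ := exists_openSubgroup_lt_index (J := J) (p ^ n)
    obtain ⟨m, hm⟩ := hJp N N.isOpen
    have hnm : n ≤ m := ((Nat.pow_lt_pow_iff_right hp).1 (hm ▸ hN)).le
    refine ⟨(a * (p : ℤ) ^ (m - n)) • charFn ℤ N.isClopen, ?_⟩
    have hp0 : (p : ℝ) ≠ 0 := by positivity
    rw [map_zsmul, integralAddHom_charFn, hm, zsmul_eq_mul]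
    push_cast
    rw [← pow_sub_mul_pow (p : ℝ) hnm]
    field_simp

end HaarIntegral

section AwayIntCast

variable (K : Type*) [Field K] [CharZero K] {p : ℤ} (hp : p ≠ 0)

noncomputable def awayIntCast : Localization.Away p →+* K :=
  Localization.awayLift (Int.castRingHom K) p
    (isUnit_iff_exists_inv.2 ⟨(p : K)⁻¹, mul_inv_cancel₀ (Int.cast_ne_zero.2 hp)⟩)

theorem awayIntCast_mk (a : ℤ) (n : ℕ) :
    awayIntCast K hp (Localization.mk a ⟨p ^ n, n, rfl⟩) = a / (p : K) ^ n := by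
  rw [awayIntCast, Localization.awayLift_mk (Int.castRingHom K) p a (p : K)⁻¹
    (mul_inv_cancel₀ (Int.cast_ne_zero.2 hp)), Int.coe_castRingHom, inv_pow, div_eq_mul_inv]

theorem mem_range_awayIntCast_iff (x : K) :
    x ∈ Set.range (awayIntCast K hp) ↔ ∃ (a : ℤ) (n : ℕ), x = a / (p : K) ^ n := by
  constructor
  · rintro ⟨y, rfl⟩
    induction y using Localization.induction_on with
    | H d =>
      obtain ⟨a, ⟨_, n, rfl⟩⟩ := d
      exact ⟨a, n, awayIntCast_mk K hp a n⟩
  · rintro ⟨a, n, rfl⟩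
    exact ⟨_, awayIntCast_mk K hp a n⟩

theorem awayIntCast_injective : Function.Injective (awayIntCast K hp) := by
  refine (IsLocalization.lift_injective_iff _).2 fun a b => ?_
  rw [(IsLocalization.injective (Localization.Away p)
    (powers_le_nonZeroDivisors_of_noZeroDivisors hp)).eq_iff, eq_intCast, eq_intCast,
    Int.cast_inj]

end AwayIntCast

section QuotientEquiv

variable {A B C : Type*} [AddCommGroup A] [AddCommGroup B] [AddCommGroup C] {S : AddSubgroup A}
  (φ : A →+ B) {ψ : C →+ B} (hψ : Function.Injective ψ) (hker : φ.ker = S)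
  (hrange : φ.range = ψ.range)

noncomputable def QuotientAddGroup.addEquivOfKerEqOfRangeEq : A ⧸ S ≃+ C :=
  (quotientAddEquivOfEq hker.symm).trans <| (quotientKerEquivRange φ).trans <|
    (AddEquiv.addSubgroupCongr hrange).trans (AddMonoidHom.ofInjective hψ).symm

theorem QuotientAddGroup.apply_addEquivOfKerEqOfRangeEq_mk (a : A) :
    ψ (addEquivOfKerEqOfRangeEq φ hψ hker hrange a) = φ a := by
  rw [addEquivOfKerEqOfRangeEq, AddEquiv.trans_apply, AddEquiv.trans_apply, AddEquiv.trans_apply,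
    AddMonoidHom.apply_ofInjective_symm]
  rfl

end QuotientEquiv

/-- Let `J` be an infinite profinite pro-`p` group (every open subgroup has `p`-power
index). Then the `J`-coinvariants of the smooth representation `C_c^∞(J, ℤ)` of `J`
(locally constant `ℤ`-valued functions on `J`, with `J` acting by left translation) is
isomorphic to `ℤ[1/p]`, via the Haar measure normalized so that the characteristic
function of `J` (i.e. the constant function `1`) has measure `1`. -/
theorem stmt6 (p : ℕ) [Fact p.Prime] (J : Type*) [Group J] [TopologicalSpace J]
    [IsTopologicalGroup J] [CompactSpace J] [TotallyDisconnectedSpace J] [T2Space J]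
    [Infinite J]
    (hJp : ∀ U : Subgroup J, IsOpen (U : Set J) → ∃ n : ℕ, U.index = p ^ n) :
    ∃ e : (LocallyConstant J ℤ ⧸ coinvariantsSub J) ≃+ Localization.Away (p : ℤ),
      e (QuotientAddGroup.mk (LocallyConstant.const J (1 : ℤ))) = 1 := by
  borelize J
  let μ := Measure.haarMeasure (⊤ : TopologicalSpace.PositiveCompacts J)
  have : IsProbabilityMeasure μ := ⟨by
    rw [← TopologicalSpace.PositiveCompacts.coe_top]; exact Measure.haarMeasure_self⟩
  have hp : (p : ℤ) ≠ 0 := by exact_mod_cast (Fact.out : p.Prime).ne_zero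
  have hrange :
      (LocallyConstant.integralAddHom μ).range = (awayIntCast ℝ hp).toAddMonoidHom.range := by
    ext x
    rw [mem_range_integralAddHom_iff μ (Fact.out : p.Prime).one_lt hJp, AddMonoidHom.mem_range]
    have := mem_range_awayIntCast_iff ℝ hp x
    rw [Int.cast_natCast] at this
    exact this.symm
  have he := QuotientAddGroup.apply_addEquivOfKerEqOfRangeEq_mk _ (awayIntCast_injective ℝ hp)
    (ker_integralAddHom μ) hrange (LocallyConstant.const J (1 : ℤ))
  rw [LocallyConstant.integralAddHom_const_one μ, ← map_one (awayIntCast ℝ hp)] at he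
  exact ⟨_, awayIntCast_injective ℝ hp he⟩
end

section
/- Let H be a locally profinite group (a topological group with a basis of neighborhoods of 1 consisting of compact open subgroups) and J a closed subgroup. Then the quotient map H → J\H admits a continuous section. -/
/-!
For a compact group `G` with a basis of open subgroups at `1` and a closed subgroup `L`, a
continuous section of `G → L\G` comes from Zorn's lemma applied to continuous sections of
`S\G → L\G`, for closed `S ≤ L`, ordered by refinement. A chain is bounded above by a section
over the intersection of its subgroups, by compactness. A section over `S` refines to one over
`S ∩ N` for every open normal `N`: by compactness it is constant modulo `SN` on the cosets of a
small open normal `M`, so it suffices to correct it on representatives of the open double cosets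
`LxM`. Hence the subgroup of a maximal section lies in every neighbourhood of `1`, and it is
disposed of by choosing representatives of the classes of topologically inseparable points.

In general fix a compact open subgroup `K` of `H`. The double cosets `JgK` are open, and
`k ↦ J g k` identifies `(K ∩ g⁻¹Jg)\K` with `J\JgK`, so the sections of the compact case glue.
-/

def rightCosetSetoid {H : Type*} [Group H] (J : Subgroup H) : Setoid H where
  r x y := x * y⁻¹ ∈ J
  iseqv := by
    refine ⟨fun x => by simpa using J.one_mem, fun {x y} h => ?_, fun {x y z} h1 h2 => ?_⟩
    · have := J.inv_mem h
      simpa [mul_inv_rev] using this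
    · have := J.mul_mem h1 h2
      simpa [mul_assoc] using this

open Filter Topology

namespace ContinuousCosetSection

theorem exists_subset_of_directed_of_iInter_subset {X ι : Type*} [TopologicalSpace X]
    [CompactSpace X] [Nonempty ι] {T : ι → Set X} (hT : ∀ i, IsClosed (T i))
    (hdir : Directed (· ⊇ ·) T) {U : Set X} (hU : IsOpen U) (h : ⋂ i, T i ⊆ U) :
    ∃ i, T i ⊆ U := by
  obtain ⟨i, hi⟩ := hU.isClosed_compl.isCompact.elim_directed_family_closed T hT
    (by rwa [Set.inter_comm, ← Set.sdiff_eq, Set.sdiff_eq_empty]) hdir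
  exact ⟨i, by rwa [Set.inter_comm, ← Set.sdiff_eq, Set.sdiff_eq_empty] at hi⟩

variable {G : Type*} [Group G]

theorem mul_inv_mem_trans {S : Subgroup G} {a b c : G} (hab : a * b⁻¹ ∈ S)
    (hbc : b * c⁻¹ ∈ S) : a * c⁻¹ ∈ S := by
  simpa [mul_assoc] using S.mul_mem hab hbc

theorem mul_inv_mem_symm {S : Subgroup G} {a b : G} (h : a * b⁻¹ ∈ S) : b * a⁻¹ ∈ S := by
  simpa using S.inv_mem h

theorem inf_sup_eq_of_le_of_normal (S : Subgroup G) {N M : Subgroup G} [M.Normal] (h : M ≤ N) :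
    N ⊓ (S ⊔ M) = N ⊓ S ⊔ M :=
  SetLike.coe_injective <| by
    rw [Subgroup.coe_inf, Subgroup.mul_normal, Subgroup.mul_normal, Subgroup.inf_mul_assoc _ _ _ h]

def IsRightCosetSection (L : Subgroup G) (t : G → G) : Prop :=
  (∀ x, t x * x⁻¹ ∈ L) ∧ ∀ x y, x * y⁻¹ ∈ L → t x = t y

/-- `K ∩ g⁻¹Jg`, as a subgroup of `K`. -/
def conjInf (J K : Subgroup G) (g : G) : Subgroup K :=
  J.comap ((MulAut.conj g).toMonoidHom.comp K.subtype)

theorem mem_conjInf {J K : Subgroup G} {g : G} {k : K} :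
    k ∈ conjInf J K g ↔ g * k * g⁻¹ ∈ J :=
  Iff.rfl

theorem IsRightCosetSection.eq_of_mul_mul_eq {J K : Subgroup G} {g : G} {t : K → K}
    (ht : IsRightCosetSection (conjInf J K g) t) {j j' : G} (hj : j ∈ J) (hj' : j' ∈ J)
    {k k' : K} (h : j * g * k = j' * g * k') : t k = t k' := by
  refine ht.2 _ _ (mem_conjInf.2 ?_)
  have e : g * ↑(k * k'⁻¹) * g⁻¹ = j⁻¹ * j' :=
    calc _ = j⁻¹ * (j * g * k) * (j' * g * k')⁻¹ * j' := by push_cast; group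
      _ = _ := by rw [h]; group
  rw [e]
  exact J.mul_mem (J.inv_mem hj) hj'

variable [TopologicalSpace G]

theorem exists_openSubgroup_subset_of_isOpen {K : Subgroup G} (hK : IsOpen (K : Set G))
    (hG : ∀ U ∈ 𝓝 (1 : G), ∃ N : Subgroup G, IsOpen (N : Set G) ∧ (N : Set G) ⊆ U) {U : Set K}
    (hU : U ∈ 𝓝 1) : ∃ N : OpenSubgroup K, (N : Set K) ⊆ U := by
  obtain ⟨N, hNo, hNU⟩ := hG _ (hK.isOpenEmbedding_subtypeVal.image_mem_nhds.2 hU)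
  refine ⟨⟨N.subgroupOf K, Subgroup.subgroupOf_isOpen K N hNo⟩, fun n hn => ?_⟩
  obtain ⟨u, hu, hun⟩ := hNU hn
  rwa [Subtype.ext hun] at hu

/-- A continuous section of `S\G → L\G`, for a closed subgroup `S ≤ L`, described by a lift
`t : G → G`: `t x` lies in `Lx`, `t` is constant modulo `S` on the cosets of `L`, and `x ↦ S t(x)`
is continuous. -/
structure PartialSection (L : Subgroup G) where
  S : Subgroup G
  t : G → G
  S_le : S ≤ L
  isClosed_S : IsClosed (S : Set G)
  mul_inv_mem : ∀ x, t x * x⁻¹ ∈ L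
  mul_inv_mem_of_mul_inv_mem : ∀ x y, x * y⁻¹ ∈ L → t x * (t y)⁻¹ ∈ S
  eventually_mul_inv_mem : ∀ x (N : OpenNormalSubgroup G),
    ∀ᶠ y in 𝓝 x, t y * (t x)⁻¹ ∈ S ⊔ (N : Subgroup G)

namespace PartialSection

variable {L : Subgroup G}

instance : Preorder (PartialSection L) where
  le p q := q.S ≤ p.S ∧ ∀ x, q.t x * (p.t x)⁻¹ ∈ p.S
  le_refl p := ⟨le_rfl, fun x => by simp⟩
  le_trans _ _ _ hpq hqr :=
    ⟨hqr.1.trans hpq.1, fun x => mul_inv_mem_trans (hpq.1 (hqr.2 x)) (hpq.2 x)⟩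

theorem le_def {p q : PartialSection L} :
    p ≤ q ↔ q.S ≤ p.S ∧ ∀ x, q.t x * (p.t x)⁻¹ ∈ p.S := Iff.rfl

def fiber (p : PartialSection L) (x : G) : Set G := {v | v * (p.t x)⁻¹ ∈ p.S}

theorem fiber_anti {p q : PartialSection L} (hpq : p ≤ q) (x : G) : q.fiber x ⊆ p.fiber x :=
  fun _ hv => mul_inv_mem_trans (hpq.1 hv) (hpq.2 x)

theorem exists_mem_fiber_mul_inv_mem {p : PartialSection L} {N M : Subgroup G} [N.Normal]
    (hM : ∀ x, ∀ m ∈ M, p.t (x * m) * (p.t x)⁻¹ ∈ p.S ⊔ N) {x y : G}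
    (hxy : ∃ l ∈ L, ∃ m ∈ M, y = l * x * m) : ∃ v ∈ p.fiber x, v * (p.t y)⁻¹ ∈ N := by
  obtain ⟨l, hl, m, hm, rfl⟩ := hxy
  have hym : p.t (l * x * m) * (p.t (x * m))⁻¹ ∈ p.S :=
    p.mul_inv_mem_of_mul_inv_mem _ _ (by simpa [mul_assoc] using hl)
  have hyN : p.t (l * x * m) * (p.t x)⁻¹ ∈ N ⊔ p.S := by
    rw [sup_comm]
    exact mul_inv_mem_trans (Subgroup.mem_sup_left hym) (hM x m hm)
  rw [← SetLike.mem_coe, Subgroup.normal_mul] at hyN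
  obtain ⟨n, hn, s, hs, hns⟩ := hyN
  have hty : p.t (l * x * m) = n * s * p.t x := by
    rw [show n * s = _ from hns]
    group
  refine ⟨s * p.t x, by simpa [fiber] using hs, ?_⟩
  rw [hty, show s * p.t x * (n * s * p.t x)⁻¹ = n⁻¹ by group]
  exact N.inv_mem hn

end PartialSection

variable [IsTopologicalGroup G]

theorem isClosed_conjInf {J : Subgroup G} (hJ : IsClosed (J : Set G)) (K : Subgroup G) (g : G) :
    IsClosed (conjInf J K g : Set K) :=
  hJ.preimage (by fun_prop : Continuous fun k : K => g * k * g⁻¹)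

theorem inseparable_one_of_forall_mem
    (hG : ∀ U ∈ 𝓝 (1 : G), ∃ N : OpenNormalSubgroup G, (N : Set G) ⊆ U) {z : G}
    (hz : ∀ N : OpenNormalSubgroup G, z ∈ N) : Inseparable z 1 :=
  have hz1 : z ⤳ 1 := specializes_iff_forall_open.2 fun U hU h1 =>
    let ⟨N, hN⟩ := hG U (hU.mem_nhds h1)
    hN (hz N)
  hz1.antisymm hz1.symm

theorem exists_continuous_isRightCosetSection_of_inseparable {L : Subgroup G}
    (hL : IsClosed (L : Set G)) {t : G → G} (ht : Continuous t) (hmem : ∀ x, t x * x⁻¹ ∈ L)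
    (hrel : ∀ x y, x * y⁻¹ ∈ L → Inseparable (t x) (t y)) :
    ∃ t' : G → G, Continuous t' ∧ IsRightCosetSection L t' := by
  let r : G → G := fun a => (Quotient.mk (inseparableSetoid G) a).out
  have hr (a : G) : Inseparable (r a) a := Quotient.mk_out (s := inseparableSetoid G) a
  refine ⟨r ∘ t, (continuous_congr_of_inseparable fun x => hr (t x)).2 ht, fun x => ?_,
    fun x y h => congrArg Quotient.out (Quotient.sound (hrel x y h))⟩
  exact (((hr (t x)).mul (Inseparable.refl x⁻¹)).mem_closed_iff hL).2 (hmem x)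

namespace PartialSection

variable {L : Subgroup G}

def base (hL : IsClosed (L : Set G)) : PartialSection L where
  S := L
  t := id
  S_le := le_rfl
  isClosed_S := hL
  mul_inv_mem x := by simp
  mul_inv_mem_of_mul_inv_mem _ _ h := h
  eventually_mul_inv_mem x N := by
    filter_upwards [(N.isOpen.preimage (continuous_mul_const x⁻¹)).mem_nhds (by simp)] with y hy
    exact Subgroup.mem_sup_right hy

theorem isClosed_fiber (p : PartialSection L) (x : G) : IsClosed (p.fiber x) :=
  p.isClosed_S.preimage (continuous_mul_const _)

theorem continuous_t (hG : ∀ U ∈ 𝓝 (1 : G), ∃ N : OpenNormalSubgroup G, (N : Set G) ⊆ U)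
    (p : PartialSection L) (hS : ∀ N : OpenNormalSubgroup G, p.S ≤ N) : Continuous p.t := by
  refine continuous_iff_continuousAt.2 fun x V hV => Filter.mem_map.2 ?_
  obtain ⟨N, hN⟩ := hG _ ((continuous_mul_const (p.t x)).tendsto' 1 _ (one_mul _) hV)
  filter_upwards [p.eventually_mul_inv_mem x N] with y hy
  rw [sup_eq_right.2 (hS N)] at hy
  simpa using hN hy

end PartialSection

section Compact

variable [CompactSpace G]

theorem exists_openNormalSubgroup_subset
    (hG : ∀ U ∈ 𝓝 (1 : G), ∃ N : OpenSubgroup G, (N : Set G) ⊆ U) {U : Set G}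
    (hU : U ∈ 𝓝 (1 : G)) : ∃ N : OpenNormalSubgroup G, (N : Set G) ⊆ U := by
  obtain ⟨N, hNU⟩ := hG U hU
  obtain ⟨M, hMN⟩ :=
    IsTopologicalGroup.exist_openNormalSubgroup_sub_clopen_nhds_of_one N.isClopen N.one_mem
  exact ⟨M, hMN.trans hNU⟩

theorem exists_openNormalSubgroup_forall_mul_inv_mem
    (hG : ∀ U ∈ 𝓝 (1 : G), ∃ N : OpenNormalSubgroup G, (N : Set G) ⊆ U) {f : G → G}
    {P : Subgroup G} (hf : ∀ x, ∀ᶠ y in 𝓝 x, f y * (f x)⁻¹ ∈ P) :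
    ∃ M : OpenNormalSubgroup G, ∀ x, ∀ m ∈ M, f (x * m) * (f x)⁻¹ ∈ P := by
  have hloc (x : G) : ∃ N : OpenNormalSubgroup G, ∀ m ∈ N, f (x * m) * (f x)⁻¹ ∈ P := by
    have hx : Tendsto (x * ·) (𝓝 1) (𝓝 x) :=
      (continuous_const_mul x).tendsto' 1 x (mul_one x)
    obtain ⟨N, hN⟩ := hG _ (hx.eventually (hf x))
    exact ⟨N, fun m hm => hN hm⟩
  choose N hN using hloc
  obtain ⟨s, hs⟩ := CompactSpace.elim_nhds_subcover (fun x => {y | x⁻¹ * y ∈ N x}) fun x =>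
    ((N x).isOpen.preimage (continuous_const_mul x⁻¹)).mem_nhds (by simp)
  have hcover (y : G) : ∃ x ∈ s, x⁻¹ * y ∈ N x := by
    simpa using (Set.ext_iff.1 hs y).2 trivial
  have hne : s.Nonempty := let ⟨x, hx, _⟩ := hcover 1; ⟨x, hx⟩
  refine ⟨s.inf' hne N, fun y m hm => ?_⟩
  obtain ⟨x, hxs, hxy⟩ := hcover y
  have hm' : m ∈ N x := Finset.inf'_le N hxs hm
  have hym : f (y * m) * (f x)⁻¹ ∈ P := by
    simpa [mul_assoc] using hN x _ ((N x).mul_mem hxy hm')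
  have hy : f y * (f x)⁻¹ ∈ P := by simpa using hN x _ hxy
  exact mul_inv_mem_trans hym (mul_inv_mem_symm hy)

namespace PartialSection

variable {L : Subgroup G}

theorem bddAbove_of_isChain {c : Set (PartialSection L)} (hc : IsChain (· ≤ ·) c)
    (hne : c.Nonempty) : BddAbove c := by
  have : Nonempty c := hne.to_subtype
  obtain ⟨p₀, hp₀⟩ := hne
  have hdir : Directed (· ≤ ·) (Subtype.val : c → PartialSection L) :=
    hc.directedOn.directed_val
  have hfiber (x : G) : ∃ v, ∀ p : c, v ∈ p.1.fiber x := by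
    obtain ⟨v, hv⟩ := IsCompact.nonempty_iInter_of_directed_nonempty_isCompact_isClosed
      (fun p : c => p.1.fiber x)
      (hdir.mono_comp (g := fun p => p.fiber x) _ fun _ _ h => fiber_anti h x)
      (fun p => ⟨p.1.t x, by simp [fiber]⟩) (fun p => (p.1.isClosed_fiber x).isCompact)
      fun p => p.1.isClosed_fiber x
    exact ⟨v, Set.mem_iInter.1 hv⟩
  choose t ht using hfiber
  refine ⟨{ S := ⨅ p : c, p.1.S
            t := t
            S_le := (iInf_le _ ⟨p₀, hp₀⟩).trans p₀.S_le
            isClosed_S := by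
              rw [Subgroup.coe_iInf]
              exact isClosed_iInter fun p => p.1.isClosed_S
            mul_inv_mem x := mul_inv_mem_trans (p₀.S_le (ht x ⟨p₀, hp₀⟩)) (p₀.mul_inv_mem x)
            mul_inv_mem_of_mul_inv_mem x y h := Subgroup.mem_iInf.2 fun p =>
              mul_inv_mem_trans (ht x p) (mul_inv_mem_trans
                (p.1.mul_inv_mem_of_mul_inv_mem x y h) (mul_inv_mem_symm (ht y p)))
            eventually_mul_inv_mem x N := ?_ },
    fun p hp => le_def.2 ⟨iInf_le (fun p : c => p.1.S) ⟨p, hp⟩, fun x => ht x ⟨p, hp⟩⟩⟩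
  set P := (⨅ p : c, p.1.S) ⊔ (N : Subgroup G)
  obtain ⟨p, hpP⟩ := exists_subset_of_directed_of_iInter_subset
    (T := fun p : c => (p.1.S : Set G)) (fun p => p.1.isClosed_S)
    (hdir.mono_comp (g := fun p => (p.S : Set G)) _ fun _ _ h => h.1)
    (Subgroup.isOpen_mono le_sup_right N.isOpen : IsOpen (P : Set G))
    (by rw [← Subgroup.coe_iInf]; exact SetLike.coe_subset_coe.2 le_sup_left)
  have hle : p.1.S ⊔ N ≤ P := sup_le hpP le_sup_right
  filter_upwards [p.1.eventually_mul_inv_mem x N] with y hy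
  exact mul_inv_mem_trans (hle (Subgroup.mem_sup_left (ht y p)))
    (mul_inv_mem_trans (hle hy) (hle (Subgroup.mem_sup_left (mul_inv_mem_symm (ht x p)))))

theorem exists_le_and_S_le (hG : ∀ U ∈ 𝓝 (1 : G), ∃ N : OpenNormalSubgroup G, (N : Set G) ⊆ U)
    (p : PartialSection L) (N : OpenNormalSubgroup G) :
    ∃ q : PartialSection L, p ≤ q ∧ q.S ≤ N := by
  obtain ⟨M, hM⟩ :=
    exists_openNormalSubgroup_forall_mul_inv_mem hG fun x => p.eventually_mul_inv_mem x N
  set b : G → G := fun x => (DoubleCoset.mk L M x).out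
  have hb_eq {x y : G} (h : ∃ l ∈ L, ∃ m ∈ M, y = l * x * m) : b y = b x :=
    congrArg Quotient.out ((DoubleCoset.eq L M x y).2 h).symm
  have hexists (x : G) : ∃ v ∈ p.fiber x, v * (p.t (b x))⁻¹ ∈ N := by
    obtain ⟨l, m, hl, hm, hbx⟩ := DoubleCoset.mk_out_eq_mul L M x
    exact exists_mem_fiber_mul_inv_mem hM ⟨l, hl, m, hm, hbx⟩
  choose t ht_S ht_N using hexists
  refine ⟨{ S := p.S ⊓ N
            t := t
            S_le := inf_le_left.trans p.S_le
            isClosed_S := p.isClosed_S.inter N.toOpenSubgroup.isClosed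
            mul_inv_mem x := mul_inv_mem_trans (p.S_le (ht_S x)) (p.mul_inv_mem x)
            mul_inv_mem_of_mul_inv_mem x y h := ?_
            eventually_mul_inv_mem x N' := ?_ },
    le_def.2 ⟨inf_le_left, ht_S⟩, inf_le_right⟩
  · have hbxy : b y = b x := hb_eq ⟨(x * y⁻¹)⁻¹, L.inv_mem h, 1, M.one_mem, by group⟩
    refine ⟨mul_inv_mem_trans (ht_S x) (mul_inv_mem_trans (p.mul_inv_mem_of_mul_inv_mem x y h)
      (mul_inv_mem_symm (ht_S y))), mul_inv_mem_trans (ht_N x) ?_⟩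
    rw [← hbxy]
    exact mul_inv_mem_symm (ht_N y)
  · filter_upwards [p.eventually_mul_inv_mem x (N' ⊓ N),
      (M.isOpen.preimage (continuous_const_mul x⁻¹)).mem_nhds (by simp)] with y hy hyM
    have hbxy : b y = b x := hb_eq ⟨1, L.one_mem, x⁻¹ * y, hyM, by group⟩
    have hN : t y * (t x)⁻¹ ∈ N :=
      mul_inv_mem_trans (ht_N y) (by rw [hbxy]; exact mul_inv_mem_symm (ht_N x))
    have hSN : t y * (t x)⁻¹ ∈ p.S ⊔ (N' ⊓ N : OpenNormalSubgroup G) :=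
      mul_inv_mem_trans (Subgroup.mem_sup_left (ht_S y))
        (mul_inv_mem_trans hy (Subgroup.mem_sup_left (mul_inv_mem_symm (ht_S x))))
    have hmem : t y * (t x)⁻¹ ∈ (N : Subgroup G) ⊓ p.S ⊔ (N' ⊓ N : OpenNormalSubgroup G) := by
      rw [← inf_sup_eq_of_le_of_normal p.S (inf_le_right : N' ⊓ N ≤ N)]
      exact ⟨hN, hSN⟩
    exact sup_le_sup (inf_comm (N : Subgroup G) p.S).le (inf_le_left : N' ⊓ N ≤ N') hmem

theorem S_le_of_isMax (hG : ∀ U ∈ 𝓝 (1 : G), ∃ N : OpenNormalSubgroup G, (N : Set G) ⊆ U)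
    {p : PartialSection L} (hp : IsMax p) (N : OpenNormalSubgroup G) : p.S ≤ N :=
  let ⟨_, hpq, hqN⟩ := p.exists_le_and_S_le hG N
  (hp hpq).1.trans hqN

end PartialSection

theorem exists_continuous_isRightCosetSection_of_compactSpace
    (hG : ∀ U ∈ 𝓝 (1 : G), ∃ N : OpenSubgroup G, (N : Set G) ⊆ U) {L : Subgroup G}
    (hL : IsClosed (L : Set G)) : ∃ t : G → G, Continuous t ∧ IsRightCosetSection L t := by
  have hG' : ∀ U ∈ 𝓝 (1 : G), ∃ N : OpenNormalSubgroup G, (N : Set G) ⊆ U :=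
    fun _ hU => exists_openNormalSubgroup_subset hG hU
  have : Nonempty (PartialSection L) := ⟨.base hL⟩
  obtain ⟨p, hp⟩ := zorn_le_nonempty (α := PartialSection L) fun _ hc hne =>
    PartialSection.bddAbove_of_isChain hc hne
  have hS := p.S_le_of_isMax hG' hp
  refine exists_continuous_isRightCosetSection_of_inseparable hL (p.continuous_t hG' hS)
    p.mul_inv_mem fun x y h => ?_
  have h1 := inseparable_one_of_forall_mem hG' fun N =>
    hS N (p.mul_inv_mem_of_mul_inv_mem x y h)
  simpa using h1.mul (Inseparable.refl (p.t y))

end Compact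

theorem continuousAt_of_continuous_mul {Y : Type*} [TopologicalSpace Y] {K : Subgroup G}
    (hK : IsOpen (K : Set G)) {f : G → Y} {x : G} (hf : Continuous fun n : K => f (x * n)) :
    ContinuousAt f x := by
  have h1 : ContinuousAt (fun y => f (x * y)) 1 :=
    (hK.isOpenEmbedding_subtypeVal.continuousAt_iff (x := 1)).1 hf.continuousAt
  simpa using ((Homeomorph.mulLeft x).isOpenEmbedding.continuousAt_iff (g := f) (x := 1)).1 h1

theorem exists_continuous_isRightCosetSection_of_isOpen {J K : Subgroup G}
    (hK : IsOpen (K : Set G))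
    (hT : ∀ g : G, ∃ t : K → K, Continuous t ∧ IsRightCosetSection (conjInf J K g) t) :
    ∃ s : G → G, Continuous s ∧ IsRightCosetSection J s := by
  choose T hTc hT using hT
  set r : G → G := fun x => (DoubleCoset.mk J K x).out
  have hr_eq {x y : G} (h : ∃ j ∈ J, ∃ k ∈ K, y = j * x * k) : r y = r x :=
    congrArg Quotient.out ((DoubleCoset.eq J K x y).2 h).symm
  choose j hj k hk hx using fun x => (DoubleCoset.eq J K (r x) x).1 (DoubleCoset.out_eq' J K _)
  set s : G → G := fun x => r x * T (r x) ⟨k x, hk x⟩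
  have hs {x j' k' : G} (hj' : j' ∈ J) (hk' : k' ∈ K) (hx' : x = j' * r x * k') :
      s x = r x * T (r x) ⟨k', hk'⟩ := by
    simp only [s, (hT (r x)).eq_of_mul_mul_eq (hj x) hj' (k := ⟨k x, hk x⟩) (k' := ⟨k', hk'⟩)
      ((hx x).symm.trans hx')]
  refine ⟨s, continuous_iff_continuousAt.2 fun x => continuousAt_of_continuous_mul hK ?_,
    fun x => ?_, fun x y hxy => ?_⟩
  · have hxn (n : K) : s (x * n) = r x * T (r x) (⟨k x, hk x⟩ * n) := by
      have hrn : r (x * n) = r x := hr_eq ⟨1, J.one_mem, n, n.2, by group⟩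
      have hxn : x * n = j x * r (x * n) * (k x * n) := by rw [hrn, ← mul_assoc, ← hx x]
      rw [hs (hj x) (K.mul_mem (hk x) n.2) hxn, hrn]
      rfl
    simp_rw [hxn]
    exact continuous_const.mul (continuous_subtype_val.comp ((hTc _).comp (by fun_prop)))
  · have hTk := mem_conjInf.1 ((hT (r x)).1 ⟨k x, hk x⟩)
    have e : s x * x⁻¹ =
        r x * ↑(T (r x) ⟨k x, hk x⟩ * (⟨k x, hk x⟩ : K)⁻¹) * (r x)⁻¹ * (j x)⁻¹ :=
      calc s x * x⁻¹ = s x * (j x * r x * k x)⁻¹ := by rw [← hx x]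
        _ = _ := by simp only [s]; push_cast; group
    rw [e]
    exact J.mul_mem hTk (J.inv_mem (hj x))
  · have hrxy : r x = r y := hr_eq ⟨x * y⁻¹, hxy, 1, K.one_mem, by group⟩
    have hx' : x = x * y⁻¹ * j y * r x * k y :=
      calc x = x * y⁻¹ * (j y * r y * k y) := by rw [← hx y]; group
        _ = _ := by rw [hrxy]; group
    rw [hs (J.mul_mem hxy (hj y)) (hk y) hx', hrxy]

end ContinuousCosetSection

open ContinuousCosetSection

/-- Let `H` be a locally profinite group (a topological group with a basis of
neighbourhoods of `1` consisting of compact open subgroups) and `J` a closed subgroup.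
Then the quotient map `H → J\H` admits a continuous section. -/
theorem stmt13 {H : Type*} [Group H] [TopologicalSpace H] [IsTopologicalGroup H]
    (hH : ∀ U ∈ nhds (1 : H), ∃ K : Subgroup H,
      IsCompact (K : Set H) ∧ IsOpen (K : Set H) ∧ (K : Set H) ⊆ U)
    (J : Subgroup H) (hJ : IsClosed (J : Set H)) :
    ∃ σ : Quotient (rightCosetSetoid J) → H,
      Continuous σ ∧ ∀ q : Quotient (rightCosetSetoid J),
        Quotient.mk (rightCosetSetoid J) (σ q) = q := by
  obtain ⟨K, hKc, hKo, -⟩ := hH Set.univ Filter.univ_mem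
  have : CompactSpace K := isCompact_iff_compactSpace.1 hKc
  have hbasis (U : Set K) (hU : U ∈ 𝓝 1) : ∃ N : OpenSubgroup K, (N : Set K) ⊆ U :=
    exists_openSubgroup_subset_of_isOpen hKo
      (fun V hV => (hH V hV).imp fun _ hN => ⟨hN.2.1, hN.2.2⟩) hU
  obtain ⟨s, hs, hsJ, hs_eq⟩ := exists_continuous_isRightCosetSection_of_isOpen hKo fun g =>
    exists_continuous_isRightCosetSection_of_compactSpace hbasis (isClosed_conjInf hJ K g)
  exact ⟨Quotient.lift s hs_eq, hs.quotient_lift hs_eq,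
    Quotient.ind fun x => Quotient.sound (hsJ x)⟩
end

section
/- Let X be a locally profinite topological space with a countable basis of open sets and V a module over a commutative ring R. Then the natural map C_c^∞(X, R) ⊗_R V → C_c^∞(X, V) is an isomorphism, and C_c^∞(X, R) is a free R-module. -/
open TensorProduct

/-- `C_c^∞(X, V)`: the `R`-module of locally constant, compactly supported functions
from `X` to an `R`-module `V`. -/
def Ccinf (X : Type*) [TopologicalSpace X] (R : Type*) [CommRing R]
    (V : Type*) [AddCommGroup V] [Module R V] : Submodule R (X → V) where
  carrier := {f | IsLocallyConstant f ∧ HasCompactSupport f}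
  zero_mem' := ⟨IsLocallyConstant.const 0, by
    simpa [HasCompactSupport, tsupport, Function.support] using isCompact_empty⟩
  add_mem' := fun hf hg => ⟨hf.1.comp₂ hg.1 (· + ·), hf.2.add hg.2⟩
  smul_mem' := fun c f hf => ⟨hf.1.comp (c • ·), hf.2.mono (by
    intro x hx
    simp only [Function.mem_support, Pi.smul_apply] at hx ⊢
    exact fun h => hx (by rw [h, smul_zero]))⟩

/-!
Enumerate the compact open sets as `U 0, U 1, …`; there are countably many. Each
`f ∈ C_c^∞(X, V)` is constant on the cells of the partition by `x ↦ {i < n | x ∈ U i}` for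
some `n`, and vanishes on the cell `∅` outside all `U i`. Refining from `n` to `n + 1` cuts every
cell along `U n`, and the new freedom is one value on each piece `U n ∩ cell` whose cell is
genuinely cut (or is the cell `∅`). The indicators of these pieces therefore form a "Haar system":
`c ↦ ∑ c p • 1_{piece p}` is a linear bijection `(I →₀ V) ≃ C_c^∞(X, V)` for every `V`, natural
in `V`. Taking `V = R` gives freeness, and `(I →₀ R) ⊗ V ≃ (I →₀ V)` gives the tensor identity.
-/

open Topology

theorem Ccinf.indicator_const_mem {X : Type*} [TopologicalSpace X] {R : Type*} [CommRing R]
    {V : Type*} [AddCommGroup V] [Module R V] {A : Set X} (hA : IsClopen A) (hAc : IsCompact A)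
    (v : V) : A.indicator (fun _ => v) ∈ Ccinf X R V :=
  ⟨(LocallyConstant.indicator (LocallyConstant.const X v) hA).isLocallyConstant,
    HasCompactSupport.intro' hAc hA.isClosed fun _ hx => Set.indicator_of_notMem hx _⟩

section CompactOpens

open TopologicalSpace

variable {X : Type*} [TopologicalSpace X] [SecondCountableTopology X]

theorem countable_setOf_isCompact_isOpen : {K : Set X | IsCompact K ∧ IsOpen K}.Countable := by
  obtain ⟨b, hbc, -, hb⟩ := exists_countable_basis X
  have : Countable b := hbc.to_subtype
  refine (Set.Countable.ofPred_finite.image fun s : Set b => ⋃ i ∈ s, (i : Set X)).mono ?_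
  rintro K ⟨hKc, hKo⟩
  obtain ⟨s, hs, rfl⟩ := eq_finite_iUnion_of_isTopologicalBasis_of_isCompact_open
    ((↑) : b → Set X) (by rwa [Subtype.range_coe]) K hKc hKo
  exact ⟨s, hs, rfl⟩

theorem exists_isTopologicalBasis_range_isCompact
    (hX : ∀ x : X, ∀ O ∈ 𝓝 x, ∃ s : Set X, IsCompact s ∧ IsOpen s ∧ x ∈ s ∧ s ⊆ O) :
    ∃ U : ℕ → Set X, IsTopologicalBasis (Set.range U) ∧ ∀ n, IsCompact (U n) := by
  obtain ⟨U, hU⟩ := countable_setOf_isCompact_isOpen.exists_eq_range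
    (⟨∅, isCompact_empty, isOpen_empty⟩ : {K : Set X | IsCompact K ∧ IsOpen K}.Nonempty)
  refine ⟨U, hU ▸ isTopologicalBasis_of_isOpen_of_nhds (fun _ hK => hK.2) fun x O hxO hO => ?_,
    fun n => (hU.symm ▸ Set.mem_range_self n : U n ∈ {K : Set X | IsCompact K ∧ IsOpen K}).1⟩
  obtain ⟨s, hsc, hso, hxs, hsO⟩ := hX x O (hO.mem_nhds hxO)
  exact ⟨s, ⟨hsc, hso⟩, hxs, hsO⟩

end CompactOpens

namespace Ccinf

section HaarSystem

variable {X : Type*} {R : Type*} [CommRing R] {V : Type*} [AddCommGroup V] [Module R V]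
  (U : ℕ → Set X)

open scoped Classical in
noncomputable def trace (n : ℕ) (x : X) : Finset ℕ := {i ∈ Finset.range n | x ∈ U i}

def haarSet (n : ℕ) (s : Finset ℕ) : Set X := U n ∩ trace U n ⁻¹' {s}

/-- `(n, s)` indexes a Haar function when `U n` cuts the cell `trace U n ⁻¹' {s}` into two
nonempty pieces; for the cell `s = ∅`, on which all level-`n` functions vanish, it suffices that
the piece inside `U n` is nonempty. -/
def IsHaarIndex (n : ℕ) (s : Finset ℕ) : Prop :=
  (haarSet U n s).Nonempty ∧ (s = ∅ ∨ ¬ trace U n ⁻¹' {s} ⊆ U n)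

abbrev HaarIndex : Type _ := {p : ℕ × Finset ℕ // IsHaarIndex U p.1 p.2}

variable (R V) in
noncomputable def levelSubmodule (n : ℕ) : Submodule R (X → V) :=
  (LinearMap.ker (LinearMap.proj ∅ : (Finset ℕ → V) →ₗ[R] V)).map
    (LinearMap.funLeft R V (trace U n))

variable (R) in
noncomputable def indicatorConstₗ (A : Set X) : V →ₗ[R] X → V where
  toFun v := A.indicator fun _ => v
  map_add' _ _ := Set.indicator_add A _ _
  map_smul' r _ := Set.indicator_const_smul A r _

variable (R) in
noncomputable def haarMap : (HaarIndex U →₀ V) →ₗ[R] X → V :=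
  Finsupp.lsum R fun p => indicatorConstₗ R (haarSet U p.1.1 p.1.2)

variable {U}

@[simp]
theorem mem_trace {n i : ℕ} {x : X} : i ∈ trace U n x ↔ i < n ∧ x ∈ U i := by
  simp [trace]

theorem trace_subset_range (n : ℕ) (x : X) : trace U n x ⊆ Finset.range n :=
  fun _ hi => Finset.mem_range.2 (mem_trace.1 hi).1

theorem trace_zero (x : X) : trace U 0 x = ∅ := by
  ext; simp

open scoped Classical in
theorem trace_succ (n : ℕ) (x : X) :
    trace U (n + 1) x = if x ∈ U n then insert n (trace U n x) else trace U n x := by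
  ext i
  split_ifs <;> simp only [mem_trace, Finset.mem_insert] <;> grind

theorem filter_trace {m n : ℕ} (hmn : m ≤ n) (x : X) :
    {i ∈ trace U n x | i < m} = trace U m x := by
  ext i
  simp only [Finset.mem_filter, mem_trace]
  grind

theorem isLocallyConstant_trace [TopologicalSpace X] (hU : ∀ i, IsClopen (U i)) (n : ℕ) :
    IsLocallyConstant (trace U n) := by
  refine (IsLocallyConstant.iff_eventually_eq _).2 fun x => ?_
  have hi : ∀ i ∈ Finset.range n, ∀ᶠ y in 𝓝 x, (y ∈ U i ↔ x ∈ U i) := fun i _ => by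
    by_cases hx : x ∈ U i
    · filter_upwards [(hU i).isOpen.mem_nhds hx] with y hy using iff_of_true hy hx
    · filter_upwards [(hU i).isClosed.isOpen_compl.mem_nhds hx] with y hy using iff_of_false hy hx
  filter_upwards [(Finset.eventually_all _).2 hi] with y hy
  ext i
  simp only [mem_trace]
  exact and_congr_right fun hin => hy i (Finset.mem_range.2 hin)

theorem mem_levelSubmodule {n : ℕ} {f : X → V} :
    f ∈ levelSubmodule R V U n ↔ ∃ g : Finset ℕ → V, g ∅ = 0 ∧ ∀ x, f x = g (trace U n x) := by
  simp only [levelSubmodule, Submodule.mem_map, LinearMap.mem_ker, LinearMap.proj_apply,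
    funext_iff, LinearMap.funLeft_apply]
  exact exists_congr fun g => and_congr_right fun _ => forall_congr' fun _ => eq_comm

theorem mem_levelSubmodule_of_factorsThrough {n : ℕ} {f : X → V}
    (hf : ∀ x y, trace U n x = trace U n y → f x = f y) (h0 : ∀ x, trace U n x = ∅ → f x = 0) :
    f ∈ levelSubmodule R V U n := by
  refine mem_levelSubmodule.2 ⟨Function.extend (trace U n) f 0, ?_, fun x => ?_⟩
  · by_cases h : ∃ x, trace U n x = ∅
    · obtain ⟨x, hx⟩ := h
      rw [← hx, Function.FactorsThrough.extend_apply (fun x y h => hf x y h), h0 x hx]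
    · exact Function.extend_apply' _ _ _ h
  · exact (Function.FactorsThrough.extend_apply (fun x y h => hf x y h) _ x).symm

theorem eq_zero_of_mem_levelSubmodule_zero {f : X → V} (hf : f ∈ levelSubmodule R V U 0) :
    f = 0 := by
  obtain ⟨g, hg, hfg⟩ := mem_levelSubmodule.1 hf
  ext x
  rw [hfg, trace_zero, hg, Pi.zero_apply]

theorem haarMap_apply (c : HaarIndex U →₀ V) (x : X) :
    haarMap R U c x = c.sum fun p v => (haarSet U p.1.1 p.1.2).indicator (fun _ => v) x := by
  simp [haarMap, indicatorConstₗ, Finsupp.sum, Finset.sum_apply]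

@[simp]
theorem haarMap_single (p : HaarIndex U) (v : V) :
    haarMap R U (Finsupp.single p v) = (haarSet U p.1.1 p.1.2).indicator fun _ => v :=
  Finsupp.lsum_single _ _ _ _

theorem haarMap_mapRange {W : Type*} [AddCommGroup W] [Module R W] (φ : V →ₗ[R] W)
    (c : HaarIndex U →₀ V) :
    haarMap R U (Finsupp.mapRange.linearMap φ c) = φ ∘ haarMap R U c := by
  refine LinearMap.congr_fun (f := haarMap R U ∘ₗ Finsupp.mapRange.linearMap φ)
    (g := LinearMap.compLeft φ X ∘ₗ haarMap R U)
    (Finsupp.lhom_ext fun p v => funext fun x => ?_) c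
  by_cases hx : x ∈ haarSet U p.1.1 p.1.2 <;> simp [hx]

theorem haarMap_single_mem_levelSubmodule {n : ℕ} (p : HaarIndex U) (hp : p.1.1 < n) (v : V) :
    haarMap R U (Finsupp.single p v) ∈ levelSubmodule R V U n := by
  obtain ⟨⟨m, s⟩, hms⟩ := p
  open scoped Classical in
  refine mem_levelSubmodule.2
    ⟨fun t => if m ∈ t ∧ {i ∈ t | i < m} = s then v else 0, by simp, fun x => ?_⟩
  simp only [haarMap_single, Set.indicator_apply, haarSet, Set.mem_inter_iff, Set.mem_preimage,
    Set.mem_singleton_iff, mem_trace, filter_trace hp.le]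
  simp [hp]

theorem haarMap_mem_levelSubmodule {n : ℕ} {c : HaarIndex U →₀ V}
    (hc : ∀ p ∈ c.support, p.1.1 < n) : haarMap R U c ∈ levelSubmodule R V U n := by
  rw [← c.sum_single, map_finsuppSum]
  exact Submodule.sum_mem _ fun p hp => haarMap_single_mem_levelSubmodule p (hc p hp) _

open scoped Classical in
theorem haarMap_apply_of_level {n : ℕ} {c : HaarIndex U →₀ V} (hc : ∀ p ∈ c.support, p.1.1 = n)
    (x : X) : haarMap R U c x =
      if hx : x ∈ U n ∧ IsHaarIndex U n (trace U n x) then c ⟨(n, trace U n x), hx.2⟩ else 0 := by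
  rw [haarMap_apply, Finsupp.sum]
  split_ifs with hx
  · rw [Finset.sum_eq_single ⟨(n, trace U n x), hx.2⟩]
    · exact Set.indicator_of_mem (show x ∈ haarSet U n _ from ⟨hx.1, rfl⟩) _
    · rintro ⟨⟨m, s⟩, hms⟩ hp hne
      refine Set.indicator_of_notMem (fun hxp => hne ?_) _
      obtain rfl : m = n := hc _ hp
      obtain rfl : trace U m x = s := hxp.2
      rfl
    · intro hp
      rw [Finsupp.notMem_support_iff.1 hp, Set.indicator_zero]
  · refine Finset.sum_eq_zero fun ⟨⟨m, s⟩, hms⟩ hp => Set.indicator_of_notMem ?_ _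
    rintro ⟨hxU, hxs⟩
    obtain rfl : m = n := hc _ hp
    obtain rfl : trace U m x = s := hxs
    exact hx ⟨hxU, hms⟩

theorem eq_zero_of_haarMap_mem_levelSubmodule {n : ℕ} {c : HaarIndex U →₀ V}
    (hc : ∀ p ∈ c.support, p.1.1 = n) (h : haarMap R U c ∈ levelSubmodule R V U n) : c = 0 := by
  obtain ⟨g, hg0, hg⟩ := mem_levelSubmodule.1 h
  ext ⟨⟨m, s⟩, hms⟩
  by_contra hne
  obtain rfl : m = n := hc _ (Finsupp.mem_support_iff.2 hne)
  obtain ⟨⟨x, hxU, hxs⟩, hs⟩ := id hms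
  dsimp only at hxU hxs hs
  obtain rfl : trace U m x = s := hxs
  have hcx : haarMap R U c x = c ⟨(m, trace U m x), hms⟩ := by
    rw [haarMap_apply_of_level hc, dif_pos ⟨hxU, hms⟩]
  refine hne ?_
  rw [Finsupp.coe_zero, Pi.zero_apply]
  rcases hs with hs | hs
  · rw [← hcx, hg, hs, hg0]
  · obtain ⟨y, hy, hyU⟩ := Set.not_subset.1 hs
    rw [Set.mem_preimage, Set.mem_singleton_iff] at hy
    rw [← hcx, hg, ← hy, ← hg, haarMap_apply_of_level hc, dif_neg fun h => hyU h.1]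

theorem haarMap_injective :
    Function.Injective (haarMap R U : (HaarIndex U →₀ V) →ₗ[R] X → V) := by
  rw [← LinearMap.ker_eq_bot, LinearMap.ker_eq_bot']
  suffices ∀ n (c : HaarIndex U →₀ V), (∀ p ∈ c.support, p.1.1 < n) → haarMap R U c = 0 → c = 0
    from fun c => this _ c fun p hp => Nat.lt_succ_of_le (Finset.le_sup (f := (·.1.1)) hp)
  intro n
  induction n with
  | zero => exact fun c hc _ => Finsupp.support_eq_empty.1 <|
      Finset.eq_empty_of_forall_notMem fun p hp => Nat.not_lt_zero _ (hc p hp)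
  | succ n ih =>
    intro c hc h0
    set low := c.filter (·.1.1 < n)
    set top := c.filter (¬ ·.1.1 < n)
    have hsum : low + top = c := c.filter_add_filter_not _
    have hlow : haarMap R U low ∈ levelSubmodule R V U n :=
      haarMap_mem_levelSubmodule fun p hp => (Finset.mem_filter.1 hp).2
    have htop : top = 0 := by
      refine eq_zero_of_haarMap_mem_levelSubmodule (R := R) (n := n) (fun p hp => ?_) ?_
      · obtain ⟨hpc, hpn⟩ := Finset.mem_filter.1 hp
        have := hc p hpc
        omega
      · rw [← hsum, map_add] at h0
        rw [eq_neg_of_add_eq_zero_right h0]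
        exact neg_mem hlow
    rw [← hsum, htop, add_zero] at h0 ⊢
    exact ih low (fun p hp => (Finset.mem_filter.1 hp).2) h0

open scoped Classical in
theorem levelSubmodule_succ_le (n : ℕ) :
    levelSubmodule R V U (n + 1) ≤ levelSubmodule R V U n ⊔ LinearMap.range (haarMap R U) := by
  intro f hf
  obtain ⟨g, hg0, hfg⟩ := mem_levelSubmodule.1 hf
  -- the coefficient at `(n, s)` is the jump of `f` across `U n` inside the cell `s`
  let c : HaarIndex U →₀ V := Finsupp.onFinset
    (((Finset.range n).powerset.image (Prod.mk n)).subtype _)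
    (fun p => if p.1.1 = n then g (insert n p.1.2) - g p.1.2 else 0)
    fun ⟨⟨m, s⟩, ⟨x, _, hxs⟩, _⟩ hp => by
      obtain rfl : m = n := by_contra fun h => hp (if_neg h)
      refine Finset.mem_subtype.2 (Finset.mem_image.2 ⟨s, Finset.mem_powerset.2 ?_, rfl⟩)
      have hxs : trace U m x = s := hxs
      exact hxs ▸ trace_subset_range m x
  have hc : ∀ p ∈ c.support, p.1.1 = n := fun p hp =>
    by_contra fun h => Finsupp.mem_support_iff.1 hp (if_neg h)
  have hcoef (t : Finset ℕ) (ht : IsHaarIndex U n t) : c ⟨(n, t), ht⟩ = g (insert n t) - g t :=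
    if_pos rfl
  refine Submodule.mem_sup.2
    ⟨f - haarMap R U c, ?_, haarMap R U c, LinearMap.mem_range_self _ c, sub_add_cancel f _⟩
  refine mem_levelSubmodule.2 ⟨fun t => if t = ∅ ∨ ¬ trace U n ⁻¹' {t} ⊆ U n then g t
    else g (insert n t), by simp only [true_or, if_true, hg0], fun x => ?_⟩
  rw [Pi.sub_apply, hfg, trace_succ, haarMap_apply_of_level hc]
  beta_reduce
  by_cases hxU : x ∈ U n
  · have hx : x ∈ haarSet U n (trace U n x) := ⟨hxU, rfl⟩
    by_cases hH : IsHaarIndex U n (trace U n x)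
    · rw [if_pos hxU, dif_pos ⟨hxU, hH⟩, hcoef, if_pos hH.2, sub_sub_cancel]
    · rw [if_pos hxU, dif_neg (fun h => hH h.2), sub_zero, if_neg (fun h => hH ⟨⟨x, hx⟩, h⟩)]
  · rw [if_neg hxU, dif_neg (fun h => hxU h.1), sub_zero,
      if_pos (Or.inr fun h => hxU (h rfl))]

theorem levelSubmodule_le_range_haarMap (n : ℕ) :
    levelSubmodule R V U n ≤ LinearMap.range (haarMap R U) := by
  induction n with
  | zero => exact fun f hf => eq_zero_of_mem_levelSubmodule_zero hf ▸ zero_mem _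
  | succ n ih => exact (levelSubmodule_succ_le n).trans (sup_le ih le_rfl)

end HaarSystem

section Topology

open TopologicalSpace

variable {X : Type*} [TopologicalSpace X] {R : Type*} [CommRing R] {V : Type*} [AddCommGroup V]
  [Module R V] {U : ℕ → Set X}

theorem isClopen_haarSet [T2Space X] (hb : IsTopologicalBasis (Set.range U))
    (hc : ∀ n, IsCompact (U n)) (n : ℕ) (s : Finset ℕ) : IsClopen (haarSet U n s) :=
  have hU (i : ℕ) : IsClopen (U i) := ⟨(hc i).isClosed, hb.isOpen (Set.mem_range_self i)⟩
  (hU n).inter ((isLocallyConstant_trace hU n).isClopen_fiber s)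

theorem range_haarMap_le_Ccinf [T2Space X] (hb : IsTopologicalBasis (Set.range U))
    (hc : ∀ n, IsCompact (U n)) : LinearMap.range (haarMap R U) ≤ Ccinf X R V := by
  rintro _ ⟨c, rfl⟩
  rw [← c.sum_single, map_finsuppSum]
  refine Submodule.sum_mem _ fun p _ => ?_
  have hp := isClopen_haarSet hb hc p.1.1 p.1.2
  simp only [haarMap_single]
  exact indicator_const_mem hp ((hc _).of_isClosed_subset hp.isClosed Set.inter_subset_left) _

theorem exists_mem_levelSubmodule (hb : IsTopologicalBasis (Set.range U)) {f : X → V}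
    (hf : f ∈ Ccinf X R V) : ∃ n, f ∈ levelSubmodule R V U n := by
  obtain ⟨hlc, hcs⟩ := hf
  have hloc (x : X) : ∃ m, x ∈ U m ∧ ∀ y ∈ U m, f y = f x := by
    obtain ⟨O, hO, hxO, hfO⟩ := hlc.exists_open x
    obtain ⟨_, ⟨m, rfl⟩, hxm, hmO⟩ := hb.exists_subset_of_mem_open hxO hO
    exact ⟨m, hxm, fun y hy => hfO y (hmO hy)⟩
  choose m hxm hfm using hloc
  obtain ⟨t, ht⟩ := hcs.elim_finite_subcover (fun x => U (m x))
    (fun x => hb.isOpen (Set.mem_range_self _)) fun x _ => Set.mem_iUnion.2 ⟨x, hxm x⟩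
  have htrace : ∀ z ∈ t, ∀ y, m z ∈ trace U (t.sup m + 1) y ↔ y ∈ U (m z) := fun z hz _ =>
    mem_trace.trans (and_iff_right (Nat.lt_succ_of_le (Finset.le_sup hz)))
  have hzero (y : X) (hy : ∀ z ∈ t, y ∉ U (m z)) : f y = 0 :=
    image_eq_zero_of_notMem_tsupport fun hmem => by
      obtain ⟨z, hz, hyz⟩ := Set.mem_iUnion₂.1 (ht hmem)
      exact hy z hz hyz
  refine ⟨t.sup m + 1, mem_levelSubmodule_of_factorsThrough (fun x y hxy => ?_) fun x hx => ?_⟩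
  · by_cases hx : ∃ z ∈ t, x ∈ U (m z)
    · obtain ⟨z, hz, hxz⟩ := hx
      have hyz : y ∈ U (m z) := (htrace z hz y).1 (hxy ▸ (htrace z hz x).2 hxz)
      rw [hfm z x hxz, hfm z y hyz]
    · simp only [not_exists, not_and] at hx
      have hy : ∀ z ∈ t, y ∉ U (m z) := fun z hz hyz =>
        hx z hz ((htrace z hz x).1 (hxy ▸ (htrace z hz y).2 hyz))
      rw [hzero x hx, hzero y hy]
  · exact hzero x fun z hz hxz => by simpa [hx] using (htrace z hz x).2 hxz

variable (R V) in
noncomputable def haarEquiv [T2Space X] (hb : IsTopologicalBasis (Set.range U))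
    (hc : ∀ n, IsCompact (U n)) : (HaarIndex U →₀ V) ≃ₗ[R] Ccinf X R V :=
  LinearEquiv.ofBijective
    ((haarMap R U).codRestrict (Ccinf X R V) fun c => range_haarMap_le_Ccinf hb hc ⟨c, rfl⟩)
    ⟨fun _ _ h => haarMap_injective (congrArg Subtype.val h), fun f =>
      have ⟨n, hn⟩ := exists_mem_levelSubmodule hb f.2
      have ⟨c, hcf⟩ := levelSubmodule_le_range_haarMap n hn
      ⟨c, Subtype.ext hcf⟩⟩

theorem coe_haarEquiv_apply [T2Space X] (hb : IsTopologicalBasis (Set.range U))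
    (hc : ∀ n, IsCompact (U n)) (c : HaarIndex U →₀ V) :
    (haarEquiv R V hb hc c : X → V) = haarMap R U c :=
  rfl

end Topology

end Ccinf

/-- Let `X` be a locally profinite topological space (Hausdorff with a basis of compact
open sets) with a countable basis of open sets, `R` a commutative ring and `V` an
`R`-module. Then the natural map `C_c^∞(X, R) ⊗_R V → C_c^∞(X, V)`,
`f ⊗ v ↦ (x ↦ f x • v)`, is an isomorphism, and `C_c^∞(X, R)` is a free `R`-module. -/
theorem stmt15 (X : Type*) [TopologicalSpace X] [T2Space X]
    [SecondCountableTopology X]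
    (hX : ∀ x : X, ∀ U ∈ nhds x, ∃ s : Set X, IsCompact s ∧ IsOpen s ∧ x ∈ s ∧ s ⊆ U)
    (R : Type*) [CommRing R] (V : Type*) [AddCommGroup V] [Module R V] :
    Module.Free R (Ccinf X R R) ∧
    ∃ e : (Ccinf X R R ⊗[R] V) ≃ₗ[R] Ccinf X R V,
      ∀ (f : Ccinf X R R) (v : V),
        ((e (f ⊗ₜ[R] v) : Ccinf X R V) : X → V) = fun x => (f : X → R) x • v := by
  obtain ⟨U, hb, hc⟩ := exists_isTopologicalBasis_range_isCompact hX
  let eR := Ccinf.haarEquiv R R hb hc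
  refine ⟨.of_equiv eR, TensorProduct.congr eR.symm (.refl R V) ≪≫ₗ
    finsuppScalarLeft R V _ ≪≫ₗ Ccinf.haarEquiv R V hb hc, fun f v => ?_⟩
  obtain ⟨c, rfl⟩ := eR.surjective f
  have hsl : finsuppScalarLeft R V _ (c ⊗ₜ v) =
      Finsupp.mapRange.linearMap (LinearMap.toSpanSingleton R V v) c := by
    ext p
    simp [finsuppScalarLeft_apply_tmul_apply]
  simp only [LinearEquiv.trans_apply, congr_tmul, LinearEquiv.symm_apply_apply,
    LinearEquiv.refl_apply, hsl, Ccinf.coe_haarEquiv_apply, Ccinf.haarMap_mapRange]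
  rfl
end

section
/- Let H be a topological group, X a topological H-space, and suppose H acts transitively on X with H/K countable for some compact open subgroup K of H, and H, X are locally compact Hausdorff. Then for any x ∈ X the orbit map h ↦ h·x induces a homeomorphism H/H_x ≅ X, where H_x is the stabilizer of x. In particular, for two closed subgroups I, J of H with H = IJ, the inclusion induces a homeomorphism I/(I∩J) ≅ H/J. -/
/-!
A countable union of translates of the compact subgroup `K` exhausts `H`, so `H` is σ-compact.
The orbit map `H ⧸ H_x → X` is a continuous bijection, and by the Baire category argument behind
the open mapping theorem for σ-compact groups acting transitively on Baire spaces it is open,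
hence a homeomorphism. For `H = IJ` apply this to the σ-compact group `I` acting transitively on
the Hausdorff (as `J` is closed), locally compact space `H ⧸ J`, where the stabilizer of the
trivial coset is `I ∩ J`.
-/

open MulAction Set Pointwise

theorem sigmaCompactSpace_of_countable_quotient {G : Type*} [Group G] [TopologicalSpace G]
    [ContinuousMul G] (K : Subgroup G) (hK : IsCompact (K : Set G)) [Countable (G ⧸ K)] :
    SigmaCompactSpace G := by
  have hcover : ⋃ q : G ⧸ K, q.out • (K : Set G) = univ :=
    eq_univ_of_forall fun g => mem_iUnion.2 ⟨g, mem_smul_set_iff_inv_smul_mem.2 <|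
      QuotientGroup.eq.1 (QuotientGroup.out_eq' (g : G ⧸ K))⟩
  rw [← isSigmaCompact_univ_iff, ← hcover]
  exact isSigmaCompact_iUnion_of_isCompact _ fun q => hK.smul _

namespace MulAction

variable {G X : Type*} [Group G] [TopologicalSpace G] [IsTopologicalGroup G]
  [SigmaCompactSpace G] [TopologicalSpace X] [BaireSpace X] [T2Space X]
  [MulAction G X] [ContinuousSMul G X] [IsPretransitive G X]

variable (G) in
noncomputable def quotientStabilizerHomeomorph (x : X) : G ⧸ stabilizer G x ≃ₜ X :=
  (Equiv.ofBijective (ofQuotientStabilizer G x)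
    ⟨injective_ofQuotientStabilizer G x, QuotientGroup.mk_surjective.of_comp_iff _ |>.1 <|
      surjective_smul G x⟩).toHomeomorphOfContinuousOpen
    (QuotientGroup.isOpenQuotientMap_mk.continuous_comp_iff.1 (continuous_id.smul continuous_const))
    (QuotientGroup.isOpenQuotientMap_mk.isOpenMap_iff.2 (isOpenMap_smul_of_sigmaCompact x))

@[simp]
theorem quotientStabilizerHomeomorph_mk (x : X) (g : G) :
    quotientStabilizerHomeomorph G x g = g • x :=
  rfl

end MulAction

namespace Subgroup

variable {G : Type*} [Group G] {I J : Subgroup G}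

theorem isPretransitive_quotient_of_forall_eq_mul (hIJ : ∀ g : G, ∃ i ∈ I, ∃ j ∈ J, g = i * j) :
    IsPretransitive I (G ⧸ J) :=
  IsPretransitive.of_orbit (x₀ := ((1 : G) : G ⧸ J)) fun p => by
    induction p using QuotientGroup.induction_on with | H g =>
    obtain ⟨i, hi, j, hj, rfl⟩ := hIJ g
    exact ⟨⟨i, hi⟩, QuotientGroup.eq.2 (by simpa using hj)⟩

theorem stabilizer_subgroup_quotient :
    stabilizer I ((1 : G) : G ⧸ J) = J.subgroupOf I := by
  ext i
  exact SetLike.ext_iff.1 (stabilizer_quotient J) (i : G)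

theorem exists_homeomorph_quotient_subgroupOf_of_forall_eq_mul
    [TopologicalSpace G] [IsTopologicalGroup G] [LocallyCompactSpace G] [SigmaCompactSpace G]
    (hI : IsClosed (I : Set G)) (hJ : IsClosed (J : Set G))
    (hIJ : ∀ g : G, ∃ i ∈ I, ∃ j ∈ J, g = i * j) :
    ∃ e : I ⧸ J.subgroupOf I ≃ₜ G ⧸ J, ∀ i : I, e i = (i : G) := by
  have : SigmaCompactSpace I := hI.sigmaCompactSpace
  have : IsClosed (J : Set G) := hJ
  have : ContinuousSMul I (G ⧸ J) := continuousSMul_compHom continuous_subtype_val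
  have : IsPretransitive I (G ⧸ J) := isPretransitive_quotient_of_forall_eq_mul hIJ
  rw [← stabilizer_subgroup_quotient]
  exact ⟨quotientStabilizerHomeomorph I _, fun i => congrArg QuotientGroup.mk (mul_one (i : G))⟩

end Subgroup

theorem stmt16_general {H X : Type*} [Group H] [TopologicalSpace H] [IsTopologicalGroup H]
    [LocallyCompactSpace H]
    [TopologicalSpace X] [LocallyCompactSpace X] [T2Space X]
    [MulAction H X] [ContinuousSMul H X] [MulAction.IsPretransitive H X]
    (K : Subgroup H) (hKc : IsCompact (K : Set H))
    (hcount : Countable (H ⧸ K)) :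
    (∀ x : X, ∃ e : (H ⧸ MulAction.stabilizer H x) ≃ₜ X,
      ∀ h : H, e (QuotientGroup.mk h) = h • x) ∧
    (∀ I J : Subgroup H, IsClosed (I : Set H) → IsClosed (J : Set H) →
      (∀ h : H, ∃ i ∈ I, ∃ j ∈ J, h = i * j) →
      ∃ e : (I ⧸ J.subgroupOf I) ≃ₜ (H ⧸ J),
        ∀ i : I, e (QuotientGroup.mk i) = QuotientGroup.mk (i : H)) := by
  have : SigmaCompactSpace H := sigmaCompactSpace_of_countable_quotient K hKc
  exact ⟨fun x => ⟨quotientStabilizerHomeomorph H x, quotientStabilizerHomeomorph_mk x⟩,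
    fun _ _ hI hJ hIJ => Subgroup.exists_homeomorph_quotient_subgroupOf_of_forall_eq_mul hI hJ hIJ⟩

/-- Arens' theorem. Let `H` be a locally compact Hausdorff topological group acting
continuously and transitively on a locally compact Hausdorff space `X`, with `H/K`
countable for some compact open subgroup `K` of `H`. Then for any `x ∈ X` the orbit map
induces a homeomorphism `H/H_x ≅ X`, where `H_x` is the stabilizer of `x`. In
particular, for two closed subgroups `I, J` of `H` with `H = IJ`, the inclusion induces
a homeomorphism `I/(I ∩ J) ≅ H/J`. -/
theorem stmt16 {H X : Type*} [Group H] [TopologicalSpace H] [IsTopologicalGroup H]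
    [LocallyCompactSpace H] [T2Space H]
    [TopologicalSpace X] [LocallyCompactSpace X] [T2Space X]
    [MulAction H X] [ContinuousSMul H X] [MulAction.IsPretransitive H X]
    (K : Subgroup H) (hKc : IsCompact (K : Set H)) (hKo : IsOpen (K : Set H))
    (hcount : Countable (H ⧸ K)) :
    (∀ x : X, ∃ e : (H ⧸ MulAction.stabilizer H x) ≃ₜ X,
      ∀ h : H, e (QuotientGroup.mk h) = h • x) ∧
    (∀ I J : Subgroup H, IsClosed (I : Set H) → IsClosed (J : Set H) →
      (∀ h : H, ∃ i ∈ I, ∃ j ∈ J, h = i * j) →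
      ∃ e : (I ⧸ J.subgroupOf I) ≃ₜ (H ⧸ J),
        ∀ i : I, e (QuotientGroup.mk i) = QuotientGroup.mk (i : H)) :=
  stmt16_general K hKc hcount
end

section
/- Let R be a noetherian commutative ring in which a prime p is nilpotent, H a locally pro-p group, J an open pro-p subgroup of H, and M a smooth R-representation of H such that multiplication by p on M is nilpotent. Then the following are equivalent: (i) M is admissible (M^{J'} is finitely generated over R for every open compact subgroup J' of H); (ii) M^J is finitely generated over R; (iii) M^J ∩ Ker(p : M → M) is finitely generated over R/pR. -/
/-!
(i) ⇒ (ii) and (ii) ⇒ (iii) are immediate. The other two implications rest on one fact: if an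
endomorphism `t` preserves a submodule `S` of a module over a noetherian ring and is nilpotent on
`S`, then `S` is finitely generated as soon as `S ⊓ ker t` is (induct on the nilpotency index,
passing from `S` to `t S`). With `t = p` this gives (iii) ⇒ (ii).

For (ii) ⇒ (i), `M^{J'}` lies in `M^V` for the normal core `V` of `J ∩ J'` in `J`, an open normal
subgroup of `p`-power index; induct on that index. A central element of order `p` of `J/V` lifts
to `g ∈ J`, and `K = V ⊔ ⟨g⟩` is normal in `J` of smaller index, so `M^K` is finitely generated.
On `M^V` we have `g^p = 1`, hence `(g - 1)^p ∈ p · ℤ[g]` is nilpotent because `p` is, and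
`M^V ⊓ ker (g - 1) = M^K`.
-/

def fixedSub {R H M : Type*} [CommRing R] [Group H] [AddCommGroup M] [Module R M]
    (ρ : Representation R H M) (J' : Subgroup H) : Submodule R M where
  carrier := {m | ∀ u ∈ J', ρ u m = m}
  zero_mem' := by intro u _; simp
  add_mem' := by intro a b ha hb u hu; rw [map_add, ha u hu, hb u hu]
  smul_mem' := by intro c a ha u hu; rw [map_smul, ha u hu]

open Set Subgroup

section FixedVectors

variable {R G H M : Type*} [CommRing R] [Group G] [Group H] [AddCommGroup M] [Module R M]

namespace Representation

def stabilizer (σ : Representation R G M) (x : M) : Subgroup G where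
  carrier := {g | σ g x = x}
  one_mem' := by simp
  mul_mem' {a b} ha hb := by simp_all [Module.End.mul_apply]
  inv_mem' {a} (ha : σ a x = x) := by
    simpa [ha] using σ.inv_self_apply a x

end Representation

variable (σ : Representation R G M)

theorem mem_fixedSub_iff_le_stabilizer {K : Subgroup G} {x : M} :
    x ∈ fixedSub σ K ↔ K ≤ σ.stabilizer x :=
  Iff.rfl

theorem fixedSub_antitone : Antitone (fixedSub σ) :=
  fun _ _ hUV _ hx u hu => hx u (hUV hu)

theorem fixedSub_sup_zpowers (U : Subgroup G) (g : G) :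
    fixedSub σ (U ⊔ zpowers g) = fixedSub σ U ⊓ LinearMap.ker (σ g - 1) := by
  ext x
  simp only [Submodule.mem_inf, mem_fixedSub_iff_le_stabilizer, sup_le_iff, zpowers_le,
    LinearMap.mem_ker, LinearMap.sub_apply, Module.End.one_apply, sub_eq_zero]
  rfl

theorem mapsTo_fixedSub_of_mem_normalizer {U : Subgroup G} {g : G}
    (hg : g ∈ normalizer (U : Set G)) : MapsTo (σ g) (fixedSub σ U) (fixedSub σ U) := by
  intro x hx u hu
  have hconj : g⁻¹ * u * g ∈ U := by
    simpa using (mem_normalizer_iff.mp (inv_mem hg) u).mp hu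
  calc σ u (σ g x) = σ g (σ (g⁻¹ * u * g) x) := by
        simp only [map_mul, Module.End.mul_apply, σ.self_inv_apply]
    _ = σ g x := by rw [hx _ hconj]

theorem fixedSub_comp (ρ : Representation R H M) (f : G →* H) (U : Subgroup G) :
    fixedSub (ρ.comp f) U = fixedSub ρ (U.map f) := by
  ext x
  exact ⟨fun hx _ ⟨u, hu, hfu⟩ => hfu ▸ hx u hu,
    fun hx u hu => hx (f u) (mem_map_of_mem f hu)⟩

end FixedVectors

namespace Submodule

variable {R M : Type*} [CommRing R] [IsNoetherianRing R] [AddCommGroup M] [Module R M]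

theorem fg_of_fg_inf_ker_of_le_ker_pow {S : Submodule R M} {T : Module.End R M} {m : ℕ}
    (hT : S.map T ≤ S) (hS : S ≤ LinearMap.ker (T ^ m)) (hker : (S ⊓ LinearMap.ker T).FG) :
    S.FG := by
  induction m generalizing S with
  | zero =>
    rw [pow_zero, Module.End.one_eq_id, LinearMap.ker_id, le_bot_iff] at hS
    exact hS ▸ fg_bot
  | succ m ih =>
    refine fg_of_fg_map_of_fg_inf_ker T (ih (map_mono hT) ?_ (hker.of_le ?_)) hker
    · rintro _ ⟨x, hx, rfl⟩
      rw [LinearMap.mem_ker, ← Module.End.mul_apply, ← pow_succ]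
      exact hS hx
    · exact inf_le_inf_right _ hT

theorem fg_of_fg_inf_ker_of_isNilpotent_restrict {S : Submodule R M} {T : Module.End R M}
    (hT : MapsTo T S S) (hnil : IsNilpotent (T.restrict hT)) (hker : (S ⊓ LinearMap.ker T).FG) :
    S.FG := by
  obtain ⟨m, hm⟩ := hnil
  refine fg_of_fg_inf_ker_of_le_ker_pow (m := m) (map_le_iff_le_comap.mpr hT) (fun x hx => ?_)
    hker
  have := congr_arg Subtype.val (LinearMap.congr_fun hm ⟨x, hx⟩)
  rw [Module.End.pow_restrict m hT] at this
  simpa using this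

theorem fg_of_fg_inf_ker_smul_id {S : Submodule R M} {r : R} (hr : IsNilpotent r)
    (hker : (S ⊓ LinearMap.ker (r • LinearMap.id : M →ₗ[R] M)).FG) : S.FG := by
  have hT : MapsTo (r • LinearMap.id : M →ₗ[R] M) S S := fun _ hx => S.smul_mem r hx
  have hnil : IsNilpotent (r • LinearMap.id : M →ₗ[R] M) := by
    simpa [← Module.algebraMap_end_eq_smul_id] using hr.map (algebraMap R (Module.End R M))
  exact fg_of_fg_inf_ker_of_isNilpotent_restrict hT (Module.End.isNilpotent.restrict hT hnil) hker

end Submodule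

theorem isNilpotent_sub_one_of_pow_eq_one {A : Type*} [Ring A] {p : ℕ} (hp : p.Prime)
    (hpA : IsNilpotent (p : A)) {a : A} (ha : a ^ p = 1) : IsNilpotent (a - 1) := by
  obtain ⟨c, hc⟩ := (Commute.one_right (a - 1)).exists_add_pow_prime_eq hp
  rw [sub_add_cancel, ha, one_pow, mul_one, add_right_comm, right_eq_add] at hc
  have : (a - 1) ^ p = (p : A) * -((a - 1) * c) := by
    rw [mul_neg, ← mul_assoc, eq_neg_iff_add_eq_zero, hc]
  exact IsNilpotent.of_pow (m := p) (this ▸ (Nat.cast_commute p _).isNilpotent_mul_right hpA)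

namespace Subgroup

variable {G : Type*} [Group G]

theorem normal_zpowers_of_mem_center {z : G} (hz : z ∈ center G) : (zpowers z).Normal where
  conj_mem n hn g := by
    rwa [mem_center_iff.mp (zpowers_le.mpr hz hn) g, mul_inv_cancel_right]

theorem exists_sup_zpowers_normal_of_index_eq_prime_pow {p k : ℕ} [Fact p.Prime]
    (U : Subgroup G) [U.Normal] (hU : U.index = p ^ (k + 1)) :
    ∃ g ∉ U, g ^ p ∈ U ∧ (U ⊔ zpowers g).Normal := by
  have : U.FiniteIndex := ⟨by simp [hU, (Fact.out : p.Prime).ne_zero]⟩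
  obtain ⟨m, hm, hcard⟩ := IsPGroup.card_center_eq_prime_pow (G := G ⧸ U)
    ((index_eq_card U).symm.trans hU) k.succ_pos
  obtain ⟨z, hz⟩ := exists_prime_orderOf_dvd_card' (G := center (G ⧸ U)) p
    (hcard ▸ dvd_pow_self p hm.ne')
  obtain ⟨g, hg⟩ := QuotientGroup.mk_surjective (z : G ⧸ U)
  have hgz : orderOf (g : G ⧸ U) = p := by rw [hg, orderOf_coe, hz]
  refine ⟨g, fun hgU => ?_, ?_, ?_⟩
  · rw [(QuotientGroup.eq_one_iff g).mpr hgU, orderOf_one] at hgz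
    exact (Fact.out : p.Prime).one_lt.ne hgz
  · rw [← QuotientGroup.eq_one_iff, QuotientGroup.mk_pow, ← hgz, pow_orderOf_eq_one]
  · have : U ⊔ zpowers g = (zpowers (g : G ⧸ U)).comap (QuotientGroup.mk' U) := by
      rw [← QuotientGroup.mk'_apply, ← MonoidHom.map_zpowers, comap_map_eq,
        QuotientGroup.ker_mk', sup_comm]
    rw [this]
    exact (normal_zpowers_of_mem_center (hg ▸ z.2)).comap _

variable [TopologicalSpace G] [IsTopologicalGroup G]

theorem isOpen_normalCore {U : Subgroup G} [U.FiniteIndex] (hU : IsOpen (U : Set G)) :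
    IsOpen (U.normalCore : Set G) :=
  U.normalCore.isOpen_of_isClosed_of_finiteIndex (U.normalCore_isClosed (U.isClosed_of_isOpen hU))

end Subgroup

section Induction

variable {p : ℕ} [Fact p.Prime] {R G M : Type*} [CommRing R] [IsNoetherianRing R] [Group G]
  [AddCommGroup M] [Module R M] (σ : Representation R G M)

theorem fg_fixedSub_of_fg_fixedSub_sup_zpowers (hp : IsNilpotent (p : R)) {U : Subgroup G}
    {g : G} (hg : g ∈ normalizer (U : Set G)) (hgp : g ^ p ∈ U)
    (hK : (fixedSub σ (U ⊔ zpowers g)).FG) : (fixedSub σ U).FG := by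
  have hgU := mapsTo_fixedSub_of_mem_normalizer σ hg
  have hT : MapsTo ⇑(σ g - 1 : Module.End R M) (fixedSub σ U) (fixedSub σ U) := fun _ hx =>
    Submodule.sub_mem _ (hgU hx) hx
  have hrestrict : (σ g - 1).restrict hT = (σ g).restrict hgU - 1 := by
    ext; rfl
  have hpow : (σ g).restrict hgU ^ p = 1 := by
    ext ⟨x, hx⟩
    rw [Module.End.pow_restrict p hgU]
    simpa [← map_pow] using hx _ hgp
  refine Submodule.fg_of_fg_inf_ker_of_isNilpotent_restrict hT ?_ ?_
  · rw [hrestrict]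
    refine isNilpotent_sub_one_of_pow_eq_one Fact.out ?_ hpow
    simpa using hp.map (algebraMap R (Module.End R (fixedSub σ U)))
  · rwa [← fixedSub_sup_zpowers]

theorem fg_fixedSub_of_index_eq_prime_pow (hp : IsNilpotent (p : R))
    (htop : (fixedSub σ ⊤).FG) (k : ℕ) :
    ∀ (U : Subgroup G) [U.Normal], U.index = p ^ k → (fixedSub σ U).FG := by
  induction k using Nat.strong_induction_on with
  | _ k ih =>
  intro U _ hU
  cases k with
  | zero => rwa [index_eq_one.mp (hU.trans (pow_zero p))]
  | succ k =>
  obtain ⟨g, hgU, hgp, hK⟩ := U.exists_sup_zpowers_normal_of_index_eq_prime_pow hU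
  have : U.FiniteIndex := ⟨by simp [hU, (Fact.out : p.Prime).ne_zero]⟩
  have hdvd : (U ⊔ zpowers g).index ∣ p ^ (k + 1) := hU ▸ index_dvd_of_le le_sup_left
  obtain ⟨j, -, hKindex⟩ := (Nat.dvd_prime_pow Fact.out).mp hdvd
  have hlt : (U ⊔ zpowers g).index < U.index :=
    index_strictAnti (lt_of_le_of_ne le_sup_left fun h => hgU (h ▸ mem_sup_right (mem_zpowers g)))
  rw [hKindex, hU] at hlt
  refine fg_fixedSub_of_fg_fixedSub_sup_zpowers σ hp ?_ hgp (ih j ?_ _ hKindex)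
  · simp [normalizer_eq_top]
  · exact (Nat.pow_lt_pow_iff_right (Fact.out : p.Prime).one_lt).mp hlt

end Induction

theorem fg_fixedSub_of_isOpen {p : ℕ} [Fact p.Prime] {R : Type*} [CommRing R]
    [IsNoetherianRing R] (hp : IsNilpotent (p : R)) {H : Type*} [Group H] [TopologicalSpace H]
    [IsTopologicalGroup H]
    {J : Subgroup H} (hJp : ∀ U : Subgroup J, IsOpen (U : Set J) → ∃ n : ℕ, U.index = p ^ n)
    {M : Type*} [AddCommGroup M] [Module R M] (ρ : Representation R H M)
    (hJ : (fixedSub ρ J).FG) {J' : Subgroup H} (hJ' : IsOpen (J' : Set H)) :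
    (fixedSub ρ J').FG := by
  set U := J'.subgroupOf J
  have hUo : IsOpen (U : Set J) := hJ'.preimage continuous_subtype_val
  have : U.FiniteIndex := by
    obtain ⟨n, hn⟩ := hJp U hUo
    exact ⟨by simp [hn, (Fact.out : p.Prime).ne_zero]⟩
  obtain ⟨k, hk⟩ := hJp _ (isOpen_normalCore hUo)
  have htop : (fixedSub (ρ.comp J.subtype) ⊤).FG := by
    rwa [fixedSub_comp, ← MonoidHom.range_eq_map, range_subtype]
  have hcore := fg_fixedSub_of_index_eq_prime_pow _ hp htop k U.normalCore hk
  rw [fixedSub_comp] at hcore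
  refine hcore.of_le (fixedSub_antitone ρ ?_)
  rintro _ ⟨u, hu, rfl⟩
  exact mem_subgroupOf.mp (normalCore_le U hu)

theorem stmt19_general (p : ℕ) [Fact p.Prime] {R : Type*} [CommRing R] [IsNoetherianRing R]
    (hpR : IsNilpotent (p : R))
    {H : Type*} [Group H] [TopologicalSpace H] [IsTopologicalGroup H]
    (J : Subgroup H) (hJo : IsOpen (J : Set H)) (hJc : IsCompact (J : Set H))
    (hJp : ∀ U : Subgroup J, IsOpen (U : Set J) → ∃ n : ℕ, U.index = p ^ n)
    {M : Type*} [AddCommGroup M] [Module R M] (ρ : Representation R H M) :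
    ((∀ J' : Subgroup H, IsOpen (J' : Set H) → IsCompact (J' : Set H) →
        (fixedSub ρ J').FG) ↔ (fixedSub ρ J).FG) ∧
    ((fixedSub ρ J).FG ↔
      (fixedSub ρ J ⊓ LinearMap.ker ((p : R) • (LinearMap.id : M →ₗ[R] M))).FG) :=
  ⟨⟨fun h => h J hJo hJc, fun hJ _ hJ' _ => fg_fixedSub_of_isOpen hpR hJp ρ hJ hJ'⟩,
    ⟨fun hJ => hJ.of_le inf_le_left, Submodule.fg_of_fg_inf_ker_smul_id hpR⟩⟩

/-- Let `R` be a noetherian commutative ring in which the prime `p` is nilpotent, `H` a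
locally pro-`p` group with open compact pro-`p` subgroup `J` (pro-`p`: every open
subgroup of `J` has `p`-power index), and `M` a smooth `R`-representation of `H` on which
multiplication by `p` is nilpotent.  Then the following are equivalent:
(i) `M` is admissible, i.e. `M^{J'}` is finitely generated over `R` for every compact
open subgroup `J'` of `H`; (ii) `M^J` is finitely generated over `R`;
(iii) `M^J ∩ Ker(p : M → M)` is finitely generated over `R/pR` (equivalently, since `p`
kills it, finitely generated over `R`). -/
theorem stmt19 (p : ℕ) [Fact p.Prime] {R : Type*} [CommRing R] [IsNoetherianRing R]
    (hpR : IsNilpotent (p : R))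
    {H : Type*} [Group H] [TopologicalSpace H] [IsTopologicalGroup H]
    (J : Subgroup H) (hJo : IsOpen (J : Set H)) (hJc : IsCompact (J : Set H))
    (hJp : ∀ U : Subgroup J, IsOpen (U : Set J) → ∃ n : ℕ, U.index = p ^ n)
    {M : Type*} [AddCommGroup M] [Module R M] (ρ : Representation R H M)
    (hsmooth : ∀ m : M, ∃ U : Subgroup H, IsOpen (U : Set H) ∧ ∀ u ∈ U, ρ u m = m)
    (hnilM : ∃ n : ℕ, ∀ m : M, (p : R) ^ n • m = 0) :
    ((∀ J' : Subgroup H, IsOpen (J' : Set H) → IsCompact (J' : Set H) →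
        (fixedSub ρ J').FG) ↔ (fixedSub ρ J).FG) ∧
    ((fixedSub ρ J).FG ↔
      (fixedSub ρ J ⊓ LinearMap.ker ((p : R) • (LinearMap.id : M →ₗ[R] M))).FG) :=
  stmt19_general p hpR J hJo hJc hJp ρ
end
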